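/- arXiv:2001.07679 — 8 statements merged into one kernel-verified Lean document; each statement's English description precedes it below -/
import Mathlib

section
/- Let S be a nonempty finite set and T : S → S → ℝ a row-stochastic matrix (all entries nonnegative and each row sums to 1). Then the Cesaro averages T^{(t)} := (1/t) Σ_{k=0}^{t-1} T^k converge entrywise as t → ∞; i.e., there exists a matrix Π : S → S → ℝ such that for all s, s' ∈ S, lim_{t→∞} (1/t) Σ_{k=0}^{t-1} (T^k) s s' = Π s s'. -/
/-!
A row-stochastic matrix acts on `S → ℝ` with the sup norm as a 1-Lipschitz linear map `f`.
For such an `f` on a finite-dimensional space, the fixed subspace `ker (f - 1)` meets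
`range (f - 1)` only in `0`: if `f x = x` and `x = f y - y`, then `f^[n] y = y + n • x` would be
unbounded unless `x = 0`. By rank–nullity the two subspaces are then complementary, and the
abstract mean ergodic theorem applies: Cesàro averages fix the first summand and tend to `0` on
the second. Applied to the basis vectors this gives convergence of the columns of the averages.
-/

open Filter Topology

namespace LinearMap

variable {𝕜 E : Type*} [RCLike 𝕜] [NormedAddCommGroup E] [NormedSpace 𝕜 E]

theorem disjoint_eqLocus_one_range_sub_one (f : E →ₗ[𝕜] E) (hf : LipschitzWith 1 f) :
    Disjoint (eqLocus f 1) (range (f - 1)) := by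
  rw [Submodule.disjoint_def]
  rintro _ hfx ⟨y, rfl⟩
  set x := (f - 1) y
  replace hfx : f x = x := hfx
  have iterate_sub : ∀ n : ℕ, f^[n] y - y = (n : 𝕜) • x := by
    intro n
    induction n with
    | zero => simp
    | succ n ih =>
      rw [Function.iterate_succ_apply', ← sub_add_cancel (f^[n] y) y, ih, map_add, map_smul, hfx]
      simp only [x, sub_apply, Nat.cast_succ, add_smul, one_smul]
      abel
  have linear_bound : ∀ n : ℕ, n * ‖x‖ ≤ 2 * ‖y‖ := fun n => by
    have : ‖f^[n] y‖ ≤ ‖y‖ := by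
      simpa [iterate_map_zero] using (hf.iterate n).dist_le_mul y 0
    calc n * ‖x‖ = ‖f^[n] y - y‖ := by rw [iterate_sub, norm_smul, RCLike.norm_natCast]
      _ ≤ 2 * ‖y‖ := by linarith [norm_sub_le (f^[n] y) y]
  by_contra hx
  obtain ⟨n, hn⟩ := exists_nat_gt (2 * ‖y‖ / ‖x‖)
  have := linear_bound n
  rw [div_lt_iff₀ (norm_pos_iff.2 hx)] at hn
  linarith

theorem isCompl_eqLocus_one_range_sub_one [FiniteDimensional 𝕜 E] (f : E →ₗ[𝕜] E)
    (hf : LipschitzWith 1 f) : IsCompl (eqLocus f 1) (range (f - 1)) := by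
  refine (Submodule.isCompl_iff_disjoint _ _ ?_).2 (disjoint_eqLocus_one_range_sub_one f hf)
  rw [eqLocus_eq_ker_sub, add_comm, finrank_range_add_finrank_ker]

theorem exists_tendsto_birkhoffAverage [FiniteDimensional 𝕜 E] (f : E →ₗ[𝕜] E)
    (hf : LipschitzWith 1 f) (x : E) :
    ∃ y, Tendsto (birkhoffAverage 𝕜 f _root_.id · x) atTop (𝓝 y) := by
  have hc := isCompl_eqLocus_one_range_sub_one f hf
  let g : E →L[𝕜] eqLocus f 1 := (Submodule.projectionOnto _ _ hc).toContinuousLinearMap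
  exact ⟨g x, f.tendsto_birkhoffAverage_of_ker_subset_closure hf g
    (Submodule.projectionOnto_apply_left hc)
    (fun v hv => subset_closure (Submodule.ker_projectionOnto hc ▸ hv)) x⟩

end LinearMap

namespace Matrix

variable {n : Type*} [Fintype n] [DecidableEq n] {M : Matrix n n ℝ}

theorem norm_mulVec_le_of_mem_rowStochastic (hM : M ∈ rowStochastic ℝ n) (x : n → ℝ) :
    ‖M *ᵥ x‖ ≤ ‖x‖ := by
  refine pi_norm_le_iff_of_nonneg (norm_nonneg x) |>.2 fun i => ?_
  calc ‖(M *ᵥ x) i‖ ≤ ∑ j, M i j * ‖x‖ := by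
        rw [mulVec, dotProduct]
        refine (norm_sum_le _ _).trans (Finset.sum_le_sum fun j _ => ?_)
        rw [norm_mul, Real.norm_of_nonneg (nonneg_of_mem_rowStochastic hM)]
        exact mul_le_mul_of_nonneg_left (norm_le_pi_norm x j) (nonneg_of_mem_rowStochastic hM)
    _ = ‖x‖ := by rw [← Finset.sum_mul, sum_row_of_mem_rowStochastic hM, one_mul]

theorem lipschitzWith_one_toLin'_of_mem_rowStochastic (hM : M ∈ rowStochastic ℝ n) :
    LipschitzWith 1 (toLin' M) :=
  AddMonoidHomClass.lipschitz_of_bound_nnnorm _ 1 fun x => by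
    simpa [← NNReal.coe_le_coe] using norm_mulVec_le_of_mem_rowStochastic hM x

theorem birkhoffAverage_toLin'_single_apply (M : Matrix n n ℝ) (t : ℕ) (i j : n) :
    birkhoffAverage ℝ (toLin' M) id t (Pi.single j 1) i =
      (t : ℝ)⁻¹ * ∑ k ∈ Finset.range t, (M ^ k) i j := by
  simp [birkhoffAverage, birkhoffSum, ← Module.End.coe_pow, ← toLin'_pow, Finset.sum_apply]

end Matrix

theorem cesaro_limit_exists_general {S : Type*} [Fintype S] [DecidableEq S]
    (T : Matrix S S ℝ)
    (hnn : ∀ s s', 0 ≤ T s s') (hrow : ∀ s, ∑ s', T s s' = 1) :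
    ∃ P : Matrix S S ℝ, ∀ s s' : S,
      Tendsto (fun t : ℕ => (t : ℝ)⁻¹ * ∑ k ∈ Finset.range t, (T ^ k) s s')
        atTop (nhds (P s s')) := by
  have hT : T ∈ Matrix.rowStochastic ℝ S := Matrix.mem_rowStochastic_iff_sum.2 ⟨hnn, hrow⟩
  choose L hL using (LinearMap.exists_tendsto_birkhoffAverage (Matrix.toLin' T)
    (Matrix.lipschitzWith_one_toLin'_of_mem_rowStochastic hT))
  refine ⟨fun s s' => L (Pi.single s' 1) s, fun s s' => ?_⟩
  simpa only [Matrix.birkhoffAverage_toLin'_single_apply] using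
    tendsto_pi_nhds.1 (hL (Pi.single s' 1)) s

/-- **Cesaro averages of a finite row-stochastic matrix converge entrywise.**
Let `S` be a nonempty finite set and `T : S → S → ℝ` a row-stochastic matrix. Then there is a
matrix `P` such that for all `s s'`, `(1/t) * ∑_{k<t} (T^k) s s' → P s s'` as `t → ∞`. -/
theorem cesaro_limit_exists {S : Type*} [Fintype S] [Nonempty S] [DecidableEq S]
    (T : Matrix S S ℝ)
    (hnn : ∀ s s', 0 ≤ T s s') (hrow : ∀ s, ∑ s', T s s' = 1) :
    ∃ P : Matrix S S ℝ, ∀ s s' : S,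
      Tendsto (fun t : ℕ => (t : ℝ)⁻¹ * ∑ k ∈ Finset.range t, (T ^ k) s s')
        atTop (nhds (P s s')) :=
  cesaro_limit_exists_general T hnn hrow
end

section
/- Let S be a nonempty finite set, T : S → S → ℝ a row-stochastic matrix, and Π := lim_{t→∞} (1/t) Σ_{k=0}^{t-1} T^k its limiting matrix. Then Π is itself row-stochastic (entrywise nonnegative with unit row sums) and satisfies Π T = T Π = Π Π = Π. In particular, every row of Π is an invariant probability measure of T. -/
open Filter Topology Matrix

section Aux

variable {S : Type*} [Fintype S] [Nonempty S] [DecidableEq S]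

lemma pow_nonneg_entry (T : Matrix S S ℝ) (hnn : ∀ s s', 0 ≤ T s s') :
    ∀ k s s', 0 ≤ (T ^ k) s s' := by
  intro k
  induction k with
  | zero =>
    intro s s'
    simp [Matrix.one_apply]
    split <;> norm_num
  | succ n ih =>
    intro s s'
    rw [pow_succ, Matrix.mul_apply]
    exact Finset.sum_nonneg fun j _ => mul_nonneg (ih s j) (hnn j s')

lemma pow_row_sum (T : Matrix S S ℝ) (hrow : ∀ s, ∑ s', T s s' = 1) :
    ∀ k s, ∑ s', (T ^ k) s s' = 1 := by
  intro k
  induction k with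
  | zero =>
    intro s
    simp [Matrix.one_apply]
  | succ n ih =>
    intro s
    simp only [pow_succ, Matrix.mul_apply]
    rw [Finset.sum_comm]
    have : ∀ j ∈ Finset.univ, ∑ s', (T ^ n) s j * T j s' = (T ^ n) s j := by
      intro j _
      rw [← Finset.mul_sum, hrow j, mul_one]
    rw [Finset.sum_congr rfl this, ih s]

lemma pow_le_one_entry (T : Matrix S S ℝ) (hnn : ∀ s s', 0 ≤ T s s')
    (hrow : ∀ s, ∑ s', T s s' = 1) : ∀ k s s', (T ^ k) s s' ≤ 1 := by
  intro k s s'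
  calc (T ^ k) s s' ≤ ∑ j, (T ^ k) s j :=
        Finset.single_le_sum (fun j _ => pow_nonneg_entry T hnn k s j) (Finset.mem_univ s')
    _ = 1 := pow_row_sum T hrow k s

end Aux

/-- **Properties of the limiting matrix.**
If `P` is the entrywise Cesaro limit of the powers of a row-stochastic matrix `T`, then `P` is
itself row-stochastic and `P * T = T * P = P * P = P`; in particular every row of `P` is an
invariant probability measure of `T`. -/
theorem limiting_matrix_properties {S : Type*} [Fintype S] [Nonempty S] [DecidableEq S]
    (T P : Matrix S S ℝ)
    (hnn : ∀ s s', 0 ≤ T s s') (hrow : ∀ s, ∑ s', T s s' = 1)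
    (hP : ∀ s s' : S,
      Tendsto (fun t : ℕ => (t : ℝ)⁻¹ * ∑ k ∈ Finset.range t, (T ^ k) s s')
        atTop (nhds (P s s'))) :
    (∀ s s', 0 ≤ P s s') ∧ (∀ s, ∑ s', P s s' = 1) ∧
    P * T = P ∧ T * P = P ∧ P * P = P ∧
    (∀ s : S, (P s) ᵥ* T = P s) := by
  have hpnn := pow_nonneg_entry T hnn
  have hprow := pow_row_sum T hrow
  have hple := pow_le_one_entry T hnn hrow
  have hinv : Tendsto (fun t : ℕ => (t : ℝ)⁻¹) atTop (nhds 0) :=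
    tendsto_inv_atTop_zero.comp tendsto_natCast_atTop_atTop
  -- nonnegativity of P
  have hPnn : ∀ s s', 0 ≤ P s s' := by
    intro s s'
    refine ge_of_tendsto (hP s s') (Eventually.of_forall fun t => ?_)
    exact mul_nonneg (by positivity) (Finset.sum_nonneg fun k _ => hpnn k s s')
  -- row sums of P
  have hProw : ∀ s, ∑ s', P s s' = 1 := by
    intro s
    have h1 : Tendsto (fun t : ℕ => ∑ s', (t : ℝ)⁻¹ * ∑ k ∈ Finset.range t, (T ^ k) s s')
        atTop (nhds (∑ s', P s s')) :=
      tendsto_finset_sum _ fun s' _ => hP s s'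
    have h2 : Tendsto (fun t : ℕ => ∑ s', (t : ℝ)⁻¹ * ∑ k ∈ Finset.range t, (T ^ k) s s')
        atTop (nhds 1) := by
      have : ∀ᶠ t : ℕ in atTop,
          (∑ s', (t : ℝ)⁻¹ * ∑ k ∈ Finset.range t, (T ^ k) s s') = 1 := by
        filter_upwards [eventually_ge_atTop 1] with t ht
        rw [← Finset.mul_sum, Finset.sum_comm]
        have : ∀ k ∈ Finset.range t, ∑ s', (T ^ k) s s' = 1 := fun k _ => hprow k s
        rw [Finset.sum_congr rfl this, Finset.sum_const, Finset.card_range, nsmul_eq_mul,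
          mul_one, inv_mul_cancel₀]
        exact_mod_cast Nat.one_le_iff_ne_zero.mp ht
      exact tendsto_const_nhds.congr' (by filter_upwards [this] with t h using h.symm)
    exact tendsto_nhds_unique h1 h2
  -- the shifted Cesaro sum tends to P s s'
  have hshift : ∀ s s', Tendsto
      (fun t : ℕ => (t : ℝ)⁻¹ * ∑ k ∈ Finset.range t, (T ^ (k + 1)) s s')
      atTop (nhds (P s s')) := by
    intro s s'
    have heq : ∀ t : ℕ,
        (t : ℝ)⁻¹ * ∑ k ∈ Finset.range t, (T ^ (k + 1)) s s'
          = (t : ℝ)⁻¹ * ∑ k ∈ Finset.range t, (T ^ k) s s'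
            + (t : ℝ)⁻¹ * ((T ^ t) s s' - (T ^ 0) s s') := by
      intro t
      have : ∑ k ∈ Finset.range t, (T ^ (k + 1)) s s'
          = (∑ k ∈ Finset.range t, (T ^ k) s s') + (T ^ t) s s' - (T ^ 0) s s' := by
        have h := Finset.sum_range_succ' (fun k => (T ^ k) s s') t
        have h2 := Finset.sum_range_succ (fun k => (T ^ k) s s') t
        rw [h2] at h
        linarith
      rw [this]; ring
    have hzero : Tendsto (fun t : ℕ => (t : ℝ)⁻¹ * ((T ^ t) s s' - (T ^ 0) s s'))
        atTop (nhds 0) := by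
      refine squeeze_zero_norm (a := fun t : ℕ => (t : ℝ)⁻¹ * 2) (fun t => ?_) ?_
      · rw [norm_mul, Real.norm_eq_abs, Real.norm_eq_abs, abs_of_nonneg (by positivity)]
        apply mul_le_mul_of_nonneg_left ?_ (by positivity)
        have h1 := hpnn t s s'
        have h2 := hple t s s'
        have h3 := hpnn 0 s s'
        have h4 := hple 0 s s'
        rw [abs_le]; constructor <;> linarith
      · simpa using hinv.mul_const (2:ℝ)
    simp only [heq]
    simpa using (hP s s').add hzero
  -- P * T = P
  have hPT : P * T = P := by
    ext s s'
    have h1 : Tendsto (fun t : ℕ => ∑ j, ((t : ℝ)⁻¹ * ∑ k ∈ Finset.range t, (T ^ k) s j) * T j s')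
        atTop (nhds ((P * T) s s')) := by
      rw [Matrix.mul_apply]
      exact tendsto_finset_sum _ fun j _ => (hP s j).mul_const _
    have heq : ∀ t : ℕ,
        (∑ j, ((t : ℝ)⁻¹ * ∑ k ∈ Finset.range t, (T ^ k) s j) * T j s')
          = (t : ℝ)⁻¹ * ∑ k ∈ Finset.range t, (T ^ (k + 1)) s s' := by
      intro t
      simp only [mul_assoc, ← Finset.mul_sum]
      congr 1
      simp only [Finset.sum_mul]
      rw [Finset.sum_comm]
      refine Finset.sum_congr rfl fun k _ => ?_
      rw [pow_succ, Matrix.mul_apply]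
    rw [Matrix.mul_apply] at h1
    have h2 : Tendsto (fun t : ℕ => ∑ j, ((t : ℝ)⁻¹ * ∑ k ∈ Finset.range t, (T ^ k) s j) * T j s')
        atTop (nhds (P s s')) := by
      simp only [heq]; exact hshift s s'
    rw [Matrix.mul_apply]
    exact tendsto_nhds_unique h1 h2
  -- T * P = P
  have hTP : T * P = P := by
    ext s s'
    have h1 : Tendsto (fun t : ℕ => ∑ j, T s j * ((t : ℝ)⁻¹ * ∑ k ∈ Finset.range t, (T ^ k) j s'))
        atTop (nhds ((T * P) s s')) := by
      rw [Matrix.mul_apply]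
      exact tendsto_finset_sum _ fun j _ => (hP j s').const_mul _
    have heq : ∀ t : ℕ,
        (∑ j, T s j * ((t : ℝ)⁻¹ * ∑ k ∈ Finset.range t, (T ^ k) j s'))
          = (t : ℝ)⁻¹ * ∑ k ∈ Finset.range t, (T ^ (k + 1)) s s' := by
      intro t
      simp only [mul_left_comm _ ((t:ℝ)⁻¹), ← Finset.mul_sum]
      congr 1
      simp only [Finset.mul_sum]
      rw [Finset.sum_comm]
      refine Finset.sum_congr rfl fun k _ => ?_
      rw [pow_succ', Matrix.mul_apply]
    have h2 : Tendsto (fun t : ℕ => ∑ j, T s j * ((t : ℝ)⁻¹ * ∑ k ∈ Finset.range t, (T ^ k) j s'))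
        atTop (nhds (P s s')) := by
      simp only [heq]; exact hshift s s'
    exact tendsto_nhds_unique h1 h2
  -- P * P = P
  have hPTk : ∀ k, P * T ^ k = P := by
    intro k
    induction k with
    | zero => simp
    | succ n ih => rw [pow_succ, ← Matrix.mul_assoc, ih, hPT]
  have hPP : P * P = P := by
    ext s s'
    have h1 : Tendsto (fun t : ℕ => ∑ j, P s j * ((t : ℝ)⁻¹ * ∑ k ∈ Finset.range t, (T ^ k) j s'))
        atTop (nhds ((P * P) s s')) := by
      rw [Matrix.mul_apply]
      exact tendsto_finset_sum _ fun j _ => (hP j s').const_mul _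
    have h2 : Tendsto (fun t : ℕ => ∑ j, P s j * ((t : ℝ)⁻¹ * ∑ k ∈ Finset.range t, (T ^ k) j s'))
        atTop (nhds (P s s')) := by
      have : ∀ᶠ t : ℕ in atTop,
          (∑ j, P s j * ((t : ℝ)⁻¹ * ∑ k ∈ Finset.range t, (T ^ k) j s')) = P s s' := by
        filter_upwards [eventually_ge_atTop 1] with t ht
        have : (∑ j, P s j * ((t : ℝ)⁻¹ * ∑ k ∈ Finset.range t, (T ^ k) j s'))
            = (t : ℝ)⁻¹ * ∑ k ∈ Finset.range t, (P * T ^ k) s s' := by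
          simp only [mul_left_comm _ ((t:ℝ)⁻¹), ← Finset.mul_sum]
          congr 1
          simp only [Finset.mul_sum]
          rw [Finset.sum_comm]
          refine Finset.sum_congr rfl fun k _ => ?_
          rw [Matrix.mul_apply]
        rw [this]
        simp only [hPTk]
        rw [Finset.sum_const, Finset.card_range, nsmul_eq_mul, ← mul_assoc,
          inv_mul_cancel₀ (by exact_mod_cast Nat.one_le_iff_ne_zero.mp ht), one_mul]
      exact tendsto_const_nhds.congr' (by filter_upwards [this] with t h using h.symm)
    exact tendsto_nhds_unique h1 h2
  refine ⟨hPnn, hProw, hPT, hTP, hPP, fun s => ?_⟩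
  funext s'
  have := congrFun (congrFun hPT s) s'
  rw [Matrix.mul_apply] at this
  simpa [Matrix.vecMul, dotProduct] using this
end

section
/- Let S be a nonempty finite set, T : S → S → ℝ a row-stochastic matrix, and Π := lim_{t→∞} (1/t) Σ_{k=0}^{t-1} T^k its limiting matrix. Then the matrix I − T + Π is nonsingular (invertible). -/
/-!
Write `A t = t⁻¹ • ∑_{k<t} T ^ k`. The telescoping identity `T * A t - A t = t⁻¹ • (T ^ t - 1)`
and boundedness of the powers of a stochastic matrix give `T * P = P * T = P`, hence `P * P = P`
and `P * (1 - T + P) = P`. So if `(1 - T + P) * X = 0`, then `P * X = 0` and `T * X = X`; the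
latter makes every `A t * X = X`, so `X = P * X = 0`. A left-regular square matrix is invertible.
-/

open Filter Topology Finset

section CesaroMean

variable {R : Type*} [Ring R] [Algebra ℝ R]

noncomputable def cesaroMean (T : R) (t : ℕ) : R :=
  (t : ℝ)⁻¹ • ∑ k ∈ range t, T ^ k

theorem commute_cesaroMean (T : R) (t : ℕ) : Commute T (cesaroMean T t) :=
  (Commute.sum_right _ _ _ fun k _ => Commute.self_pow T k).smul_right _

theorem mul_cesaroMean_sub (T : R) (t : ℕ) :
    T * cesaroMean T t - cesaroMean T t = (t : ℝ)⁻¹ • (T ^ t - 1) := by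
  rw [cesaroMean, mul_smul_comm, ← smul_sub, ← sub_one_mul, mul_geom_sum]

theorem mul_cesaroMean_of_mul_eq {P T : R} (hPT : P * T = P) {t : ℕ} (ht : t ≠ 0) :
    P * cesaroMean T t = P := by
  have hpow (k : ℕ) : P * T ^ k = P := by
    induction k with
    | zero => rw [pow_zero, mul_one]
    | succ k ih => rw [pow_succ, ← mul_assoc, ih, hPT]
  rw [cesaroMean, mul_smul_comm, mul_sum, sum_congr rfl fun k _ => hpow k, sum_const,
    card_range, ← Nat.cast_smul_eq_nsmul ℝ, smul_smul, inv_mul_cancel₀ (Nat.cast_ne_zero.2 ht),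
    one_smul]

theorem cesaroMean_mul_of_mul_eq {T X : R} (hTX : T * X = X) {t : ℕ} (ht : t ≠ 0) :
    cesaroMean T t * X = X := by
  have hpow (k : ℕ) : T ^ k * X = X := by
    induction k with
    | zero => rw [pow_zero, one_mul]
    | succ k ih => rw [pow_succ', mul_assoc, ih, hTX]
  rw [cesaroMean, smul_mul_assoc, sum_mul, sum_congr rfl fun k _ => hpow k, sum_const,
    card_range, ← Nat.cast_smul_eq_nsmul ℝ, smul_smul, inv_mul_cancel₀ (Nat.cast_ne_zero.2 ht),
    one_smul]

variable [TopologicalSpace R] [IsTopologicalRing R] [T2Space R] {T P : R}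

theorem mul_eq_of_tendsto_cesaroMean_of_mul_eq (hP : Tendsto (cesaroMean T) atTop (𝓝 P))
    {X : R} (hTX : T * X = X) : P * X = X := by
  have hconst : Tendsto (fun t => cesaroMean T t * X) atTop (𝓝 X) :=
    tendsto_const_nhds.congr' <| (eventually_ne_atTop 0).mono fun t ht =>
      (cesaroMean_mul_of_mul_eq hTX ht).symm
  exact tendsto_nhds_unique (hP.mul_const X) hconst

variable [ContinuousSMul ℝ R]

theorem mul_eq_right_of_tendsto_cesaroMean (hP : Tendsto (cesaroMean T) atTop (𝓝 P))
    (hT : Tendsto (fun t : ℕ => (t : ℝ)⁻¹ • T ^ t) atTop (𝓝 0)) : T * P = P := by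
  have hdiff : Tendsto (fun t => T * cesaroMean T t - cesaroMean T t) atTop (𝓝 0) := by
    have hone : Tendsto (fun t : ℕ => (t : ℝ)⁻¹ • (1 : R)) atTop (𝓝 0) := by
      simpa using
        (tendsto_inv_atTop_zero.comp (tendsto_natCast_atTop_atTop (R := ℝ))).smul_const (1 : R)
    simpa only [mul_cesaroMean_sub, smul_sub, sub_zero] using hT.sub hone
  exact sub_eq_zero.1 <| tendsto_nhds_unique ((hP.const_mul T).sub hP) hdiff

theorem mul_eq_left_of_tendsto_cesaroMean (hP : Tendsto (cesaroMean T) atTop (𝓝 P))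
    (hT : Tendsto (fun t : ℕ => (t : ℝ)⁻¹ • T ^ t) atTop (𝓝 0)) : P * T = P := by
  have hcomm : Tendsto (fun t => cesaroMean T t * T) atTop (𝓝 (T * P)) := by
    simpa only [(commute_cesaroMean T _).eq] using hP.const_mul T
  rw [mul_eq_right_of_tendsto_cesaroMean hP hT] at hcomm
  exact tendsto_nhds_unique (hP.mul_const T) hcomm

theorem isIdempotentElem_of_tendsto_cesaroMean (hP : Tendsto (cesaroMean T) atTop (𝓝 P))
    (hT : Tendsto (fun t : ℕ => (t : ℝ)⁻¹ • T ^ t) atTop (𝓝 0)) : IsIdempotentElem P := by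
  have hconst : Tendsto (fun t => P * cesaroMean T t) atTop (𝓝 P) :=
    tendsto_const_nhds.congr' <| (eventually_ne_atTop 0).mono fun t ht =>
      (mul_cesaroMean_of_mul_eq (mul_eq_left_of_tendsto_cesaroMean hP hT) ht).symm
  exact tendsto_nhds_unique (hP.const_mul P) hconst

theorem isLeftRegular_one_sub_add_of_tendsto_cesaroMean
    (hP : Tendsto (cesaroMean T) atTop (𝓝 P))
    (hT : Tendsto (fun t : ℕ => (t : ℝ)⁻¹ • T ^ t) atTop (𝓝 0)) :
    IsLeftRegular (1 - T + P) := by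
  refine isLeftRegular_iff_right_eq_zero_of_mul.2 fun X hX => ?_
  have hPX : P * X = 0 := by
    have hP_absorbs : P * (1 - T + P) = P := by
      rw [mul_add, mul_sub, mul_one, mul_eq_left_of_tendsto_cesaroMean hP hT,
        (isIdempotentElem_of_tendsto_cesaroMean hP hT).eq, sub_self, zero_add]
    rw [← hP_absorbs, mul_assoc, hX, mul_zero]
  have hTX : T * X = X := by
    rw [add_mul, sub_mul, one_mul, hPX, add_zero, sub_eq_zero] at hX
    exact hX.symm
  rw [← mul_eq_of_tendsto_cesaroMean_of_mul_eq hP hTX, hPX]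

end CesaroMean

theorem Matrix.tendsto_inv_smul_pow_of_mem_rowStochastic {n : Type*} [Fintype n]
    [DecidableEq n] {T : Matrix n n ℝ} (hT : T ∈ rowStochastic ℝ n) :
    Tendsto (fun t : ℕ => (t : ℝ)⁻¹ • T ^ t) atTop (𝓝 0) := by
  refine tendsto_pi_nhds.2 fun i => tendsto_pi_nhds.2 fun j => ?_
  have hpow (t : ℕ) : T ^ t ∈ rowStochastic ℝ n := pow_mem hT t
  refine squeeze_zero (fun t => ?_) (fun t => ?_)
    (tendsto_inv_atTop_zero.comp tendsto_natCast_atTop_atTop)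
  · exact mul_nonneg (by positivity) (nonneg_of_mem_rowStochastic (hpow t))
  · exact mul_le_of_le_one_right (by positivity) (le_one_of_mem_rowStochastic (hpow t))

theorem fundamental_matrix_invertible_general {S : Type*} [Fintype S] [DecidableEq S]
    (T P : Matrix S S ℝ)
    (hnn : ∀ s s', 0 ≤ T s s') (hrow : ∀ s, ∑ s', T s s' = 1)
    (hP : ∀ s s' : S,
      Tendsto (fun t : ℕ => (t : ℝ)⁻¹ * ∑ k ∈ Finset.range t, (T ^ k) s s')
        atTop (nhds (P s s'))) :
    IsUnit (1 - T + P) := by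
  have hT : T ∈ Matrix.rowStochastic ℝ S := Matrix.mem_rowStochastic_iff_sum.2 ⟨hnn, hrow⟩
  have hmean : Tendsto (cesaroMean T) atTop (𝓝 P) :=
    tendsto_pi_nhds.2 fun s => tendsto_pi_nhds.2 fun s' => by
      simpa [cesaroMean, Matrix.sum_apply] using hP s s'
  exact IsArtinianRing.isUnit_iff_isLeftRegular.2 <|
    isLeftRegular_one_sub_add_of_tendsto_cesaroMean hmean
      (Matrix.tendsto_inv_smul_pow_of_mem_rowStochastic hT)

/-- **The fundamental matrix exists.**
If `P` is the entrywise Cesaro limit of the powers of a row-stochastic matrix `T`, then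
`I - T + P` is nonsingular (invertible). -/
theorem fundamental_matrix_invertible {S : Type*} [Fintype S] [Nonempty S] [DecidableEq S]
    (T P : Matrix S S ℝ)
    (hnn : ∀ s s', 0 ≤ T s s') (hrow : ∀ s, ∑ s', T s s' = 1)
    (hP : ∀ s s' : S,
      Tendsto (fun t : ℕ => (t : ℝ)⁻¹ * ∑ k ∈ Finset.range t, (T ^ k) s s')
        atTop (nhds (P s s'))) :
    IsUnit (1 - T + P) :=
  fundamental_matrix_invertible_general T P hnn hrow hP
end

section
/- Let S be a nonempty finite set, T : S → S → ℝ a row-stochastic matrix with limiting matrix Π := lim_{t→∞} (1/t) Σ_{k=0}^{t-1} T^k, and r : S → ℝ. If vectors g, h : S → ℝ satisfy g = T g and g + h − T h = r, then necessarily g = Π r. In particular, the g-component of any solution of the Poisson equation with charge r is unique. -/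
open Filter Topology

/-- **Uniqueness of the `g`-component of solutions of the Poisson equation.**
Let `P` be the limiting (Cesaro) matrix of a row-stochastic matrix `T` and `r` a charge.
If `g = T g` and `g + h - T h = r` then `g = P r`. -/
theorem poisson_equation_g_unique {S : Type*} [Fintype S] [Nonempty S] [DecidableEq S]
    (T P : Matrix S S ℝ)
    (hnn : ∀ s s', 0 ≤ T s s') (hrow : ∀ s, ∑ s', T s s' = 1)
    (hP : ∀ s s' : S,
      Tendsto (fun t : ℕ => (t : ℝ)⁻¹ * ∑ k ∈ Finset.range t, (T ^ k) s s')
        atTop (nhds (P s s')))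
    (r g h : S → ℝ)
    (hg : g = T.mulVec g)
    (hgh : g + h - T.mulVec h = r) :
    g = P.mulVec r := by
  -- powers of T are nonnegative with row sums 1
  have hpow_nn : ∀ k : ℕ, ∀ s s', 0 ≤ (T ^ k) s s' := by
    intro k
    induction k with
    | zero =>
      intro s s'
      simp only [pow_zero, Matrix.one_apply]
      split <;> norm_num
    | succ n ih =>
      intro s s'
      rw [pow_succ, Matrix.mul_apply]
      exact Finset.sum_nonneg fun j _ => mul_nonneg (ih s j) (hnn j s')
  have hpow_row : ∀ k : ℕ, ∀ s, ∑ s', (T ^ k) s s' = 1 := by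
    intro k
    induction k with
    | zero =>
      intro s
      simp [Matrix.one_apply]
    | succ n ih =>
      intro s
      simp only [pow_succ, Matrix.mul_apply]
      rw [Finset.sum_comm]
      simp_rw [← Finset.mul_sum, hrow, mul_one]
      exact ih s
  have hpow_le : ∀ k : ℕ, ∀ s s', (T ^ k) s s' ≤ 1 := by
    intro k s s'
    calc (T ^ k) s s' ≤ ∑ j, (T ^ k) s j :=
          Finset.single_le_sum (fun j _ => hpow_nn k s j) (Finset.mem_univ s')
      _ = 1 := hpow_row k s
  -- g is stationary for all powers
  have hgk : ∀ k : ℕ, (T ^ k).mulVec g = g := by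
    intro k
    induction k with
    | zero => simp
    | succ n ih =>
      rw [pow_succ, ← Matrix.mulVec_mulVec, ← hg, ih]
  have hr : ∀ k : ℕ, (T ^ k).mulVec r =
      g + ((T ^ k).mulVec h - (T ^ (k + 1)).mulVec h) := by
    intro k
    rw [← hgh, Matrix.mulVec_sub, Matrix.mulVec_add, hgk, Matrix.mulVec_mulVec,
      ← pow_succ]
    abel
  have key : ∀ t : ℕ, ∀ s, ∑ k ∈ Finset.range t, ((T ^ k).mulVec r) s
      = t * g s + (h s - ((T ^ t).mulVec h) s) := by
    intro t s
    have : ∀ k ∈ Finset.range t, ((T ^ k).mulVec r) s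
        = g s + (((T ^ k).mulVec h) s - ((T ^ (k + 1)).mulVec h) s) := by
      intro k _
      rw [hr k]
      rfl
    rw [Finset.sum_congr rfl this, Finset.sum_add_distrib, Finset.sum_const,
      Finset.card_range,
      Finset.sum_range_sub' (fun k => ((T ^ k).mulVec h) s) t]
    simp [nsmul_eq_mul]
  funext s
  -- the Cesaro averages of (T^k r) s converge to (P r) s
  have hL1 : Tendsto (fun t : ℕ => (t : ℝ)⁻¹ * ∑ k ∈ Finset.range t, ((T ^ k).mulVec r) s)
      atTop (nhds ((P.mulVec r) s)) := by
    have heq : (fun t : ℕ => (t : ℝ)⁻¹ * ∑ k ∈ Finset.range t, ((T ^ k).mulVec r) s)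
        = fun t : ℕ => ∑ s', ((t : ℝ)⁻¹ * ∑ k ∈ Finset.range t, (T ^ k) s s') * r s' := by
      funext t
      calc (t : ℝ)⁻¹ * ∑ k ∈ Finset.range t, ((T ^ k).mulVec r) s
          = (t : ℝ)⁻¹ * ∑ k ∈ Finset.range t, ∑ s', (T ^ k) s s' * r s' := by
            simp [Matrix.mulVec, dotProduct]
        _ = (t : ℝ)⁻¹ * ∑ s', (∑ k ∈ Finset.range t, (T ^ k) s s') * r s' := by
            rw [Finset.sum_comm]
            simp_rw [Finset.sum_mul]
        _ = ∑ s', ((t : ℝ)⁻¹ * ∑ k ∈ Finset.range t, (T ^ k) s s') * r s' := by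
            rw [Finset.mul_sum]
            simp_rw [mul_assoc]
    rw [heq]
    have : (P.mulVec r) s = ∑ s', P s s' * r s' := by
      simp [Matrix.mulVec, dotProduct]
    rw [this]
    exact tendsto_finset_sum _ fun s' _ => (hP s s').mul_const (r s')
  -- the Cesaro averages also converge to g s
  have hL2 : Tendsto (fun t : ℕ => (t : ℝ)⁻¹ * ∑ k ∈ Finset.range t, ((T ^ k).mulVec r) s)
      atTop (nhds (g s)) := by
    have heq : (fun t : ℕ => (t : ℝ)⁻¹ * ∑ k ∈ Finset.range t, ((T ^ k).mulVec r) s)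
        = fun t : ℕ => (t : ℝ)⁻¹ * (t : ℝ) * g s
            + (t : ℝ)⁻¹ * (h s - ((T ^ t).mulVec h) s) := by
      funext t
      rw [key t s]
      ring
    rw [heq]
    have h1 : Tendsto (fun t : ℕ => (t : ℝ)⁻¹ * (t : ℝ) * g s) atTop (nhds (g s)) := by
      have : ∀ᶠ t : ℕ in atTop, (t : ℝ)⁻¹ * (t : ℝ) * g s = g s := by
        filter_upwards [eventually_gt_atTop 0] with t ht
        rw [inv_mul_cancel₀ (by exact_mod_cast ht.ne')]
        ring
      have h' : (fun t : ℕ => (t : ℝ)⁻¹ * (t : ℝ) * g s) =ᶠ[atTop] (fun _ => g s) := this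
      exact Tendsto.congr' h'.symm tendsto_const_nhds
    have h2 : Tendsto (fun t : ℕ => (t : ℝ)⁻¹ * (h s - ((T ^ t).mulVec h) s)) atTop
        (nhds 0) := by
      set C : ℝ := |h s| + ∑ s', |h s'| with hC
      have hbound : ∀ t : ℕ, ‖(t : ℝ)⁻¹ * (h s - ((T ^ t).mulVec h) s)‖
          ≤ C * (t : ℝ)⁻¹ := by
        intro t
        have hTh : |((T ^ t).mulVec h) s| ≤ ∑ s', |h s'| := by
          calc |((T ^ t).mulVec h) s| = |∑ s', (T ^ t) s s' * h s'| := by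
                simp [Matrix.mulVec, dotProduct]
            _ ≤ ∑ s', |(T ^ t) s s' * h s'| := Finset.abs_sum_le_sum_abs _ _
            _ ≤ ∑ s', |h s'| := by
                apply Finset.sum_le_sum
                intro j _
                rw [abs_mul, abs_of_nonneg (hpow_nn t s j)]
                calc (T ^ t) s j * |h j| ≤ 1 * |h j| :=
                      mul_le_mul_of_nonneg_right (hpow_le t s j) (abs_nonneg _)
                  _ = |h j| := one_mul _
        have : |h s - ((T ^ t).mulVec h) s| ≤ C := by
          calc |h s - ((T ^ t).mulVec h) s| ≤ |h s| + |((T ^ t).mulVec h) s| :=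
                abs_sub _ _
            _ ≤ C := by rw [hC]; linarith
        calc ‖(t : ℝ)⁻¹ * (h s - ((T ^ t).mulVec h) s)‖
            = (t : ℝ)⁻¹ * |h s - ((T ^ t).mulVec h) s| := by
              rw [Real.norm_eq_abs, abs_mul, abs_of_nonneg (by positivity)]
          _ ≤ (t : ℝ)⁻¹ * C := by
              exact mul_le_mul_of_nonneg_left this (by positivity)
          _ = C * (t : ℝ)⁻¹ := mul_comm _ _
      have hCt : Tendsto (fun t : ℕ => C * (t : ℝ)⁻¹) atTop (nhds 0) := by
        have hinv : Tendsto (fun t : ℕ => (t : ℝ)⁻¹) atTop (nhds 0) :=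
          tendsto_inv_atTop_nhds_zero_nat
        simpa using hinv.const_mul C
      exact squeeze_zero_norm hbound hCt
    have := h1.add h2
    simpa using this
  exact tendsto_nhds_unique hL2 hL1
end

section
/- Let S be a nonempty finite set, T : S → S → ℝ a row-stochastic matrix with limiting matrix Π := lim_{t→∞} (1/t) Σ_{k=0}^{t-1} T^k, ι an initial probability distribution on S, and r : S → ℝ a reward vector. Then the long-run average expected reward exists and satisfies lim_{t→∞} (1/t) E_ι[ Σ_{k=0}^{t-1} r(X_k) ] = ι^T (Π r), where (X_t) is the Markov chain with initial distribution ι and transition matrix T. -/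
/-
The cylinder probabilities determine the one-dimensional marginals: summing the path weights
over the values of the first `k` coordinates shows that `X_k` has law `ι T^k`. Hence the expected reward
collected in the first `t` steps is `ι ⬝ (∑_{k<t} T^k) r`, and after dividing by `t` the Cesàro
averages of the powers of `T` converge to `P`, while `A ↦ ι ⬝ (A r)` is continuous.
-/

open Filter Topology MeasureTheory

section MarkovChain

open Matrix Finset

section Nonneg

variable {S R : Type*} [Fintype S] [DecidableEq S] [Semiring R] [PartialOrder R]
  [IsOrderedRing R]

theorem Matrix.vecMul_pow_apply_nonneg {v : S → R} {T : Matrix S S R} (hv : ∀ s, 0 ≤ v s)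
    (hT : ∀ s s', 0 ≤ T s s') (k : ℕ) (s : S) : 0 ≤ (v ᵥ* T ^ k) s :=
  sum_nonneg fun x _ => mul_nonneg (hv x) (pow_apply_nonneg hT k x s)

end Nonneg

section Cylinder

variable {S : Type*}

def segmentCylinder (k n : ℕ) (s : ℕ → S) : Set (ℕ → S) :=
  {ω | ∀ i ∈ Icc k n, ω i = s i}

theorem measurableSet_segmentCylinder [MeasurableSpace S] [MeasurableSingletonClass S]
    (k n : ℕ) (s : ℕ → S) : MeasurableSet (segmentCylinder k n s) := by
  have : segmentCylinder k n s = ⋂ i ∈ Icc k n, (fun ω : ℕ → S => ω i) ⁻¹' {s i} := by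
    ext ω; simp [segmentCylinder]
  rw [this]
  exact .biInter (Icc k n).countable_toSet fun i _ => measurable_pi_apply i (.singleton (s i))

theorem segmentCylinder_succ_eq_iUnion (k n : ℕ) (s : ℕ → S) :
    segmentCylinder (k + 1) n s = ⋃ x, segmentCylinder k n (Function.update s k x) := by
  ext ω
  simp only [segmentCylinder, mem_Icc, Set.mem_iUnion]
  constructor
  · intro h
    refine ⟨ω k, fun i ⟨hki, hin⟩ => ?_⟩
    rcases hki.eq_or_lt with rfl | hki
    · rw [Function.update_self]
    · rw [Function.update_of_ne hki.ne']
      exact h i ⟨hki, hin⟩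
  · rintro ⟨x, hx⟩ i ⟨hki, hin⟩
    simpa [Function.update_of_ne (by omega : i ≠ k)] using hx i ⟨by omega, hin⟩

theorem pairwise_disjoint_segmentCylinder_update {k n : ℕ} (hkn : k ≤ n) (s : ℕ → S) :
    Pairwise (Function.onFun Disjoint fun x => segmentCylinder k n (Function.update s k x)) := by
  intro x y hxy
  refine Set.disjoint_left.2 fun ω hx hy => hxy ?_
  have hk : k ∈ Icc k n := mem_Icc.2 ⟨le_rfl, hkn⟩
  simpa using (hx k hk).symm.trans (hy k hk)

end Cylinder

def IsMarkovChainLaw {S : Type*} [MeasurableSpace S] (ι : S → ℝ) (T : Matrix S S ℝ)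
    (μ : Measure (ℕ → S)) : Prop :=
  ∀ (n : ℕ) (s : ℕ → S), μ {ω | ∀ i ≤ n, ω i = s i}
    = ENNReal.ofReal (ι (s 0) * ∏ t ∈ range n, T (s t) (s (t + 1)))

namespace IsMarkovChainLaw

variable {S : Type*} [Fintype S] [DecidableEq S] [MeasurableSpace S] [MeasurableSingletonClass S]
  {ι : S → ℝ} {T : Matrix S S ℝ} {μ : Measure (ℕ → S)}

theorem measure_segmentCylinder (hμ : IsMarkovChainLaw ι T μ) (hι : ∀ s, 0 ≤ ι s)
    (hT : ∀ s s', 0 ≤ T s s') {k n : ℕ} (hkn : k ≤ n) (s : ℕ → S) :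
    μ (segmentCylinder k n s)
      = ENNReal.ofReal ((ι ᵥ* T ^ k) (s k) * ∏ t ∈ Ico k n, T (s t) (s (t + 1))) := by
  induction k generalizing s with
  | zero =>
    have : segmentCylinder 0 n s = {ω | ∀ i ≤ n, ω i = s i} := by
      ext ω; simp [segmentCylinder]
    rw [this, hμ n s, pow_zero, vecMul_one, range_eq_Ico]
  | succ k ih =>
    have hkn' : k < n := hkn
    have hterm : ∀ x, μ (segmentCylinder k n (Function.update s k x)) = ENNReal.ofReal
        ((ι ᵥ* T ^ k) x * T x (s (k + 1)) * ∏ t ∈ Ico (k + 1) n, T (s t) (s (t + 1))) := by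
      intro x
      rw [ih hkn'.le, prod_eq_prod_Ico_succ_bot hkn', Function.update_self,
        Function.update_of_ne (by omega), mul_assoc]
      congr 3
      refine prod_congr rfl fun t ht => ?_
      rw [mem_Ico] at ht
      rw [Function.update_of_ne (by omega), Function.update_of_ne (by omega)]
    rw [segmentCylinder_succ_eq_iUnion, measure_iUnion
      (pairwise_disjoint_segmentCylinder_update hkn'.le s)
      fun x => measurableSet_segmentCylinder k n _, tsum_fintype]
    -- summing out the coordinate `k` advances the marginal `ι T^k` by one step
    simp_rw [hterm]
    rw [← ENNReal.ofReal_sum_of_nonneg fun x _ => mul_nonneg (mul_nonneg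
      (vecMul_pow_apply_nonneg hι hT k x) (hT _ _)) (prod_nonneg fun t _ => hT _ _),
      ← sum_mul, pow_succ, ← vecMul_vecMul]
    rfl

theorem measure_coord_eq (hμ : IsMarkovChainLaw ι T μ) (hι : ∀ s, 0 ≤ ι s)
    (hT : ∀ s s', 0 ≤ T s s') (k : ℕ) (x : S) :
    μ {ω | ω k = x} = ENNReal.ofReal ((ι ᵥ* T ^ k) x) := by
  have : {ω : ℕ → S | ω k = x} = segmentCylinder k k fun _ => x := by
    ext ω; simp [segmentCylinder]
  simpa [this] using hμ.measure_segmentCylinder hι hT le_rfl _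

theorem integral_comp_coord [IsFiniteMeasure μ] (hμ : IsMarkovChainLaw ι T μ)
    (hι : ∀ s, 0 ≤ ι s) (hT : ∀ s s', 0 ≤ T s s') (f : S → ℝ) (k : ℕ) :
    ∫ ω, f (ω k) ∂μ = (ι ᵥ* T ^ k) ⬝ᵥ f := by
  have hk : Measurable fun ω : ℕ → S => ω k := measurable_pi_apply k
  rw [← integral_map hk.aemeasurable (Measurable.of_discrete).aestronglyMeasurable,
    integral_fintype .of_finite]
  refine sum_congr rfl fun x _ => ?_
  rw [measureReal_def, Measure.map_apply hk (.singleton x)]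
  simp only [Set.preimage, Set.mem_singleton_iff]
  rw [hμ.measure_coord_eq hι hT, ENNReal.toReal_ofReal (vecMul_pow_apply_nonneg hι hT k x),
    smul_eq_mul]

theorem integral_sum_range_comp_coord [IsFiniteMeasure μ] (hμ : IsMarkovChainLaw ι T μ)
    (hι : ∀ s, 0 ≤ ι s) (hT : ∀ s s', 0 ≤ T s s') (f : S → ℝ) (t : ℕ) :
    ∫ ω, ∑ k ∈ range t, f (ω k) ∂μ = ι ⬝ᵥ ((∑ k ∈ range t, T ^ k) *ᵥ f) := by
  have hint (k : ℕ) : Integrable (fun ω : ℕ → S => f (ω k)) μ :=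
    Integrable.of_finite.comp_measurable (measurable_pi_apply k)
  rw [integral_finsetSum _ fun k _ => hint k]
  simp only [hμ.integral_comp_coord hι hT, sum_mulVec, dotProduct_sum, dotProduct_mulVec]

end IsMarkovChainLaw

theorem tendsto_dotProduct_mulVec_of_tendsto_apply {S α : Type*} [Fintype S] {l : Filter α}
    {A : α → Matrix S S ℝ} {P : Matrix S S ℝ}
    (hA : ∀ s s', Tendsto (fun a => A a s s') l (𝓝 (P s s'))) (v w : S → ℝ) :
    Tendsto (fun a => v ⬝ᵥ (A a *ᵥ w)) l (𝓝 (v ⬝ᵥ (P *ᵥ w))) :=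
  ((by fun_prop : Continuous fun B : Matrix S S ℝ => v ⬝ᵥ (B *ᵥ w)).tendsto P).comp
    (tendsto_pi_nhds.2 fun s => tendsto_pi_nhds.2 (hA s))

end MarkovChain

theorem longrun_average_reward_general {S : Type*} [Fintype S] [DecidableEq S]
    [MeasurableSpace S] [MeasurableSingletonClass S]
    (T P : Matrix S S ℝ)
    (hnn : ∀ s s', 0 ≤ T s s')
    (hP : ∀ s s' : S,
      Tendsto (fun t : ℕ => (t : ℝ)⁻¹ * ∑ k ∈ Finset.range t, (T ^ k) s s')
        atTop (nhds (P s s')))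
    (ι : S → ℝ) (hιnn : ∀ s, 0 ≤ ι s)
    (r : S → ℝ)
    (μ : Measure (ℕ → S)) [IsProbabilityMeasure μ]
    (hμ : ∀ (n : ℕ) (s : ℕ → S),
      μ {ω | ∀ i ≤ n, ω i = s i}
        = ENNReal.ofReal (ι (s 0) * ∏ t ∈ Finset.range n, T (s t) (s (t + 1)))) :
    Tendsto
      (fun t : ℕ => (t : ℝ)⁻¹ * ∫ ω, (∑ k ∈ Finset.range t, r (ω k)) ∂μ)
      atTop (nhds (∑ s, ι s * P.mulVec r s)) := by
  have hcesaro : ∀ s s', Tendsto (fun t : ℕ => ((t : ℝ)⁻¹ • ∑ k ∈ Finset.range t, T ^ k) s s')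
      atTop (𝓝 (P s s')) := by
    simpa only [Matrix.smul_apply, Matrix.sum_apply, smul_eq_mul] using hP
  refine (tendsto_dotProduct_mulVec_of_tendsto_apply hcesaro ι r).congr fun t => ?_
  rw [IsMarkovChainLaw.integral_sum_range_comp_coord hμ hιnn hnn, Matrix.smul_mulVec,
    dotProduct_smul, smul_eq_mul]

/-- **Long-run average expected reward.**
Let `T` be row-stochastic with limiting matrix `P`, `ι` an initial probability distribution and
`r` a reward vector. If `μ` is the law of the Markov chain trajectory (the probability measure on
`ℕ → S` assigning each cylinder set its path probability), then
`(1/t) E_ι[∑_{k<t} r(X_k)] → ι^T (P r)` as `t → ∞`. -/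
theorem longrun_average_reward {S : Type*} [Fintype S] [Nonempty S] [DecidableEq S]
    [MeasurableSpace S] [MeasurableSingletonClass S]
    (T P : Matrix S S ℝ)
    (hnn : ∀ s s', 0 ≤ T s s') (hrow : ∀ s, ∑ s', T s s' = 1)
    (hP : ∀ s s' : S,
      Tendsto (fun t : ℕ => (t : ℝ)⁻¹ * ∑ k ∈ Finset.range t, (T ^ k) s s')
        atTop (nhds (P s s')))
    (ι : S → ℝ) (hιnn : ∀ s, 0 ≤ ι s) (hιsum : ∑ s, ι s = 1)
    (r : S → ℝ)
    (μ : Measure (ℕ → S)) [IsProbabilityMeasure μ]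
    (hμ : ∀ (n : ℕ) (s : ℕ → S),
      μ {ω | ∀ i ≤ n, ω i = s i}
        = ENNReal.ofReal (ι (s 0) * ∏ t ∈ Finset.range n, T (s t) (s (t + 1)))) :
    Tendsto
      (fun t : ℕ => (t : ℝ)⁻¹ * ∫ ω, (∑ k ∈ Finset.range t, r (ω k)) ∂μ)
      atTop (nhds (∑ s, ι s * P.mulVec r s)) :=
  longrun_average_reward_general T P hnn hP ι hιnn r μ hμ
end

section
/- Let S be a nonempty finite set, T : S → S → ℝ a row-stochastic matrix, and Π := lim_{t→∞} (1/t) Σ_{k=0}^{t-1} T^k its limiting matrix. Let C ⊆ S be a recurrent class: a set of recurrent states that pairwise communicate and that is closed (Σ_{s'' ∈ C} T s' s'' = 1 for all s' ∈ C). Then for all s, s' ∈ C, the entry Π s s' depends only on s', and the vector ν(s') := Π s s' (s' ∈ C) is the unique invariant probability measure of the restriction of T to C. -/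
open Filter Topology

private lemma cesaro_shift {f : ℕ → ℝ} (hb : ∀ k, |f k| ≤ 1) {L : ℝ}
    (h : Tendsto (fun t : ℕ => (t : ℝ)⁻¹ * ∑ k ∈ Finset.range t, f k) atTop (nhds L)) :
    Tendsto (fun t : ℕ => (t : ℝ)⁻¹ * ∑ k ∈ Finset.range t, f (k + 1)) atTop (nhds L) := by
  have h2 : Tendsto (fun t : ℕ => (t : ℝ)⁻¹ * (f t - f 0)) atTop (nhds 0) := by
    have hb2 : ∀ t : ℕ, ‖(t : ℝ)⁻¹ * (f t - f 0)‖ ≤ 2 * (t : ℝ)⁻¹ := by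
      intro t
      have h1 : ‖f t - f 0‖ ≤ 2 := by
        calc ‖f t - f 0‖ ≤ ‖f t‖ + ‖f 0‖ := norm_sub_le _ _
          _ ≤ 1 + 1 := add_le_add (hb t) (hb 0)
          _ = 2 := by norm_num
      rw [norm_mul]
      calc ‖(t:ℝ)⁻¹‖ * ‖f t - f 0‖ ≤ ‖(t:ℝ)⁻¹‖ * 2 :=
            mul_le_mul_of_nonneg_left h1 (norm_nonneg _)
        _ = 2 * (t:ℝ)⁻¹ := by
            rw [Real.norm_eq_abs, abs_of_nonneg (by positivity)]; ring
    have hg : Tendsto (fun t : ℕ => 2 * (t : ℝ)⁻¹) atTop (nhds 0) := by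
      simpa using tendsto_inv_atTop_nhds_zero_nat.const_mul (2:ℝ)
    exact squeeze_zero_norm hb2 hg
  have h3 := h.add h2
  rw [add_zero] at h3
  refine h3.congr fun t => ?_
  have hsum : ∑ k ∈ Finset.range t, f (k + 1)
      = (∑ k ∈ Finset.range t, f k) + f t - f 0 := by
    have e1 := Finset.sum_range_succ' f t
    have e2 := Finset.sum_range_succ f t
    linarith
  rw [hsum]; ring

/-- **Rows of the limiting matrix on a recurrent class give the unique invariant measure.**
Let `P` be the limiting (Cesaro) matrix of a row-stochastic matrix `T`, and let `C` be a
recurrent class: a nonempty set of recurrent states that pairwise communicate and is closed.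
Then for `s, s' ∈ C` the entry `P s s'` does not depend on `s`, and `ν (s') := P s s'` is the
unique invariant probability measure of the restriction of `T` to `C`. -/
theorem limiting_matrix_recurrent_class {S : Type*} [Fintype S] [Nonempty S] [DecidableEq S]
    (T P : Matrix S S ℝ)
    (hnn : ∀ s s', 0 ≤ T s s') (hrow : ∀ s, ∑ s', T s s' = 1)
    (hP : ∀ s s' : S,
      Tendsto (fun t : ℕ => (t : ℝ)⁻¹ * ∑ k ∈ Finset.range t, (T ^ k) s s')
        atTop (nhds (P s s')))
    (C : Finset S) (hCne : C.Nonempty)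
    (hrec : ∀ s ∈ C, ¬ Summable (fun k : ℕ => (T ^ (k + 1)) s s))
    (hcomm : ∀ s ∈ C, ∀ s' ∈ C,
      (∃ m : ℕ, 0 < (T ^ m) s s') ∧ (∃ n : ℕ, 0 < (T ^ n) s' s))
    (hclosed : ∀ s' ∈ C, ∑ s'' ∈ C, T s' s'' = 1) :
    (∀ s ∈ C, ∀ s'' ∈ C, ∀ s' ∈ C, P s s' = P s'' s') ∧
    (∀ s ∈ C,
      (∀ s' ∈ C, 0 ≤ P s s') ∧ (∑ s' ∈ C, P s s' = 1) ∧
      (∀ s'' ∈ C, ∑ s' ∈ C, P s s' * T s' s'' = P s s'')) ∧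
    (∀ ν : S → ℝ, (∀ s' ∈ C, 0 ≤ ν s') → (∑ s' ∈ C, ν s' = 1) →
      (∀ s'' ∈ C, ∑ s' ∈ C, ν s' * T s' s'' = ν s'') →
      ∀ s ∈ C, ∀ s' ∈ C, ν s' = P s s') := by
  classical
  -- Basic facts about powers of T
  have hpow_nn : ∀ (k : ℕ) (s s' : S), 0 ≤ (T ^ k) s s' := by
    intro k
    induction k with
    | zero =>
      intro s s'
      rw [pow_zero, Matrix.one_apply]
      split <;> norm_num
    | succ k ih =>
      intro s s'
      rw [pow_succ, Matrix.mul_apply]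
      exact Finset.sum_nonneg fun u _ => mul_nonneg (ih s u) (hnn u s')
  have hpow_row : ∀ (k : ℕ) (s : S), ∑ s', (T ^ k) s s' = 1 := by
    intro k
    induction k with
    | zero =>
      intro s
      simp [Matrix.one_apply]
    | succ k ih =>
      intro s
      simp only [pow_succ, Matrix.mul_apply]
      rw [Finset.sum_comm]
      calc ∑ u, ∑ s', (T ^ k) s u * T u s'
          = ∑ u, (T ^ k) s u * ∑ s', T u s' := by
            simp [Finset.mul_sum]
        _ = ∑ u, (T ^ k) s u := by simp [hrow]
        _ = 1 := ih s
  have hpow_le : ∀ (k : ℕ) (s s' : S), (T ^ k) s s' ≤ 1 := by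
    intro k s s'
    calc (T ^ k) s s' ≤ ∑ u, (T ^ k) s u :=
          Finset.single_le_sum (fun u _ => hpow_nn k s u) (Finset.mem_univ s')
      _ = 1 := hpow_row k s
  -- Mass never leaves C
  have hTzero : ∀ s ∈ C, ∀ u, u ∉ C → T s u = 0 := by
    intro s hs u hu
    have hcompl : ∑ u ∈ Cᶜ, T s u = 0 := by
      have h1 := Finset.sum_add_sum_compl C (T s)
      rw [hclosed s hs, hrow s] at h1
      linarith
    exact (Finset.sum_eq_zero_iff_of_nonneg fun u _ => hnn s u).mp hcompl u
      (Finset.mem_compl.mpr hu)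
  have hpowzero : ∀ (k : ℕ), ∀ s ∈ C, ∀ u, u ∉ C → (T ^ k) s u = 0 := by
    intro k
    induction k with
    | zero =>
      intro s hs u hu
      rw [pow_zero, Matrix.one_apply]
      have : s ≠ u := fun h => hu (h ▸ hs)
      simp [this]
    | succ k ih =>
      intro s hs u hu
      rw [pow_succ, Matrix.mul_apply]
      refine Finset.sum_eq_zero fun v _ => ?_
      by_cases hv : v ∈ C
      · rw [hTzero v hv u hu, mul_zero]
      · rw [ih s hs v hv, zero_mul]
  -- Basic facts about P
  have hPnn : ∀ s s' : S, 0 ≤ P s s' := by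
    intro s s'
    refine ge_of_tendsto' (hP s s') fun t => ?_
    exact mul_nonneg (by positivity) (Finset.sum_nonneg fun k _ => hpow_nn k s s')
  have hPzero : ∀ s ∈ C, ∀ u, u ∉ C → P s u = 0 := by
    intro s hs u hu
    refine tendsto_nhds_unique (hP s u) ?_
    refine tendsto_const_nhds.congr fun t => ?_
    rw [Finset.sum_eq_zero fun k _ => hpowzero k s hs u hu, mul_zero]
  have hProw : ∀ s : S, ∑ s', P s s' = 1 := by
    intro s
    have h1 : Tendsto (fun t : ℕ => ∑ s', (t : ℝ)⁻¹ * ∑ k ∈ Finset.range t, (T ^ k) s s')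
        atTop (nhds (∑ s', P s s')) := tendsto_finset_sum _ fun s' _ => hP s s'
    have h2 : Tendsto (fun t : ℕ => ∑ s', (t : ℝ)⁻¹ * ∑ k ∈ Finset.range t, (T ^ k) s s')
        atTop (nhds 1) := by
      refine Tendsto.congr' ?_ tendsto_const_nhds
      filter_upwards [eventually_ge_atTop 1] with t ht
      have htne : (t : ℝ) ≠ 0 := by positivity
      calc (1 : ℝ) = (t : ℝ)⁻¹ * t := by field_simp
        _ = ∑ s', (t : ℝ)⁻¹ * ∑ k ∈ Finset.range t, (T ^ k) s s' := by
            rw [← Finset.mul_sum, Finset.sum_comm]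
            simp [hpow_row]
    exact (tendsto_nhds_unique h1 h2)
  have hProwC : ∀ s ∈ C, ∑ s' ∈ C, P s s' = 1 := by
    intro s hs
    rw [Finset.sum_subset (Finset.subset_univ C) fun x _ hx => hPzero s hs x hx]
    exact hProw s
  -- harmonicity: T * P = P
  have hTP : ∀ s s' : S, ∑ u, T s u * P u s' = P s s' := by
    intro s s'
    have h1 : Tendsto
        (fun t : ℕ => ∑ u, T s u * ((t : ℝ)⁻¹ * ∑ k ∈ Finset.range t, (T ^ k) u s'))
        atTop (nhds (∑ u, T s u * P u s')) :=
      tendsto_finset_sum _ fun u _ => (hP u s').const_mul (T s u)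
    have h2 : Tendsto
        (fun t : ℕ => ∑ u, T s u * ((t : ℝ)⁻¹ * ∑ k ∈ Finset.range t, (T ^ k) u s'))
        atTop (nhds (P s s')) := by
      have hs' : Tendsto
          (fun t : ℕ => (t : ℝ)⁻¹ * ∑ k ∈ Finset.range t, (T ^ (k + 1)) s s')
          atTop (nhds (P s s')) := by
        refine cesaro_shift (f := fun k => (T ^ k) s s') ?_ (hP s s')
        intro k
        rw [abs_of_nonneg (hpow_nn k s s')]
        exact hpow_le k s s'
      refine hs'.congr fun t => ?_
      calc (t : ℝ)⁻¹ * ∑ k ∈ Finset.range t, (T ^ (k + 1)) s s'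
          = (t : ℝ)⁻¹ * ∑ k ∈ Finset.range t, ∑ u, T s u * (T ^ k) u s' := by
            have he : ∀ k : ℕ, (T ^ (k + 1)) s s' = ∑ u, T s u * (T ^ k) u s' := fun k => by
              rw [pow_succ', Matrix.mul_apply]
            simp only [he]
        _ = ∑ u, T s u * ((t : ℝ)⁻¹ * ∑ k ∈ Finset.range t, (T ^ k) u s') := by
            simp only [Finset.mul_sum]
            rw [Finset.sum_comm]
            exact Finset.sum_congr rfl fun u _ => Finset.sum_congr rfl fun k _ => by ring
    exact tendsto_nhds_unique h1 h2
  -- invariance: P * T = P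
  have hPT : ∀ s s' : S, ∑ u, P s u * T u s' = P s s' := by
    intro s s'
    have h1 : Tendsto
        (fun t : ℕ => ∑ u, ((t : ℝ)⁻¹ * ∑ k ∈ Finset.range t, (T ^ k) s u) * T u s')
        atTop (nhds (∑ u, P s u * T u s')) :=
      tendsto_finset_sum _ fun u _ => (hP s u).mul_const (T u s')
    have h2 : Tendsto
        (fun t : ℕ => ∑ u, ((t : ℝ)⁻¹ * ∑ k ∈ Finset.range t, (T ^ k) s u) * T u s')
        atTop (nhds (P s s')) := by
      have hs' : Tendsto
          (fun t : ℕ => (t : ℝ)⁻¹ * ∑ k ∈ Finset.range t, (T ^ (k + 1)) s s')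
          atTop (nhds (P s s')) := by
        refine cesaro_shift (f := fun k => (T ^ k) s s') ?_ (hP s s')
        intro k
        rw [abs_of_nonneg (hpow_nn k s s')]
        exact hpow_le k s s'
      refine hs'.congr fun t => ?_
      calc (t : ℝ)⁻¹ * ∑ k ∈ Finset.range t, (T ^ (k + 1)) s s'
          = (t : ℝ)⁻¹ * ∑ k ∈ Finset.range t, ∑ u, (T ^ k) s u * T u s' := by
            have he : ∀ k : ℕ, (T ^ (k + 1)) s s' = ∑ u, (T ^ k) s u * T u s' := fun k => by
              rw [pow_succ, Matrix.mul_apply]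
            simp only [he]
        _ = ∑ u, ((t : ℝ)⁻¹ * ∑ k ∈ Finset.range t, (T ^ k) s u) * T u s' := by
            simp only [Finset.mul_sum, Finset.sum_mul]
            rw [Finset.sum_comm]
            exact Finset.sum_congr rfl fun u _ => Finset.sum_congr rfl fun k _ => by ring
    exact tendsto_nhds_unique h1 h2
  -- restricted versions
  have hTPC : ∀ s ∈ C, ∀ s' : S, ∑ u ∈ C, T s u * P u s' = P s s' := by
    intro s hs s'
    rw [← hTP s s']
    exact Finset.sum_subset (Finset.subset_univ C)
      fun x _ hx => by rw [hTzero s hs x hx, zero_mul]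
  have hPTC : ∀ s ∈ C, ∀ s' : S, ∑ u ∈ C, P s u * T u s' = P s s' := by
    intro s hs s'
    rw [← hPT s s']
    exact Finset.sum_subset (Finset.subset_univ C)
      fun x _ hx => by rw [hPzero s hs x hx, zero_mul]
  -- Part 1: rows of P agree on C
  have part1 : ∀ s ∈ C, ∀ s'' ∈ C, ∀ s' ∈ C, P s s' = P s'' s' := by
    intro s hs s'' hs'' s' hs'
    obtain ⟨m, hm, hmax⟩ := C.exists_max_image (fun u => P u s') hCne
    have onestep : ∀ v ∈ C, P v s' = P m s' → ∀ u ∈ C, 0 < T v u → P u s' = P m s' := by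
      intro v hv hveq u hu hTvu
      have hsum0 : ∑ w ∈ C, T v w * (P m s' - P w s') = 0 := by
        have e1 : ∑ w ∈ C, T v w * P m s' = P m s' := by
          rw [← Finset.sum_mul, hclosed v hv, one_mul]
        have e2 := hTPC v hv s'
        calc ∑ w ∈ C, T v w * (P m s' - P w s')
            = (∑ w ∈ C, T v w * P m s') - ∑ w ∈ C, T v w * P w s' := by
              rw [← Finset.sum_sub_distrib]
              refine Finset.sum_congr rfl fun w _ => ?_
              ring
          _ = P m s' - P v s' := by rw [e1, e2]
          _ = 0 := by rw [hveq]; ring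
      have hterm : T v u * (P m s' - P u s') = 0 :=
        (Finset.sum_eq_zero_iff_of_nonneg fun w hw =>
          mul_nonneg (hnn v w) (sub_nonneg.mpr (hmax w hw))).mp hsum0 u hu
      rcases mul_eq_zero.mp hterm with h | h
      · exact absurd h (ne_of_gt hTvu)
      · linarith
    have reach : ∀ k : ℕ, ∀ u ∈ C, 0 < (T ^ k) m u → P u s' = P m s' := by
      intro k
      induction k with
      | zero =>
        intro u hu h
        rw [pow_zero, Matrix.one_apply] at h
        by_cases hmu : m = u
        · rw [hmu]
        · simp [hmu] at h
      | succ k ih =>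
        intro u hu h
        rw [pow_succ, Matrix.mul_apply] at h
        obtain ⟨v, hv⟩ : ∃ v, 0 < (T ^ k) m v * T v u := by
          by_contra hcon
          push_neg at hcon
          have hz : ∑ v, (T ^ k) m v * T v u = 0 :=
            Finset.sum_eq_zero fun v _ =>
              le_antisymm (hcon v) (mul_nonneg (hpow_nn k m v) (hnn v u))
          rw [hz] at h
          exact lt_irrefl 0 h
        have hpos : 0 < (T ^ k) m v ∧ 0 < T v u := by
          rcases mul_pos_iff.mp hv with h' | h'
          · exact h'
          · exact absurd h'.1 (not_lt.mpr (hpow_nn k m v))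
        have hvC : v ∈ C := by
          by_contra hvC
          rw [hpowzero k m hm v hvC] at hpos
          exact lt_irrefl 0 hpos.1
        exact onestep v hvC (ih v hvC hpos.1) u hu hpos.2
    obtain ⟨⟨k1, hk1⟩, -⟩ := hcomm m hm s hs
    obtain ⟨⟨k2, hk2⟩, -⟩ := hcomm m hm s'' hs''
    rw [reach k1 s hs hk1, reach k2 s'' hs'' hk2]
  -- Part 3 helper: ν is invariant under all powers (restricted to C)
  have part3 : ∀ ν : S → ℝ, (∀ s' ∈ C, 0 ≤ ν s') → (∑ s' ∈ C, ν s' = 1) →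
      (∀ s'' ∈ C, ∑ s' ∈ C, ν s' * T s' s'' = ν s'') →
      ∀ s ∈ C, ∀ s' ∈ C, ν s' = P s s' := by
    intro ν hν0 hν1 hνinv s hs s' hs'
    have invk : ∀ k : ℕ, ∀ w ∈ C, ∑ u ∈ C, ν u * (T ^ k) u w = ν w := by
      intro k
      induction k with
      | zero =>
        intro w hw
        rw [pow_zero]
        rw [Finset.sum_eq_single w]
        · simp [Matrix.one_apply]
        · intro u _ huw
          rw [Matrix.one_apply_ne huw, mul_zero]
        · intro hww
          exact absurd hw hww
      | succ k ih =>
        intro w hw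
        calc ∑ u ∈ C, ν u * (T ^ (k + 1)) u w
            = ∑ u ∈ C, ν u * ∑ v, (T ^ k) u v * T v w := by
              have he : ∀ u : S, (T ^ (k + 1)) u w = ∑ v, (T ^ k) u v * T v w := fun u => by
                rw [pow_succ, Matrix.mul_apply]
              simp only [he]
          _ = ∑ v, (∑ u ∈ C, ν u * (T ^ k) u v) * T v w := by
              simp only [Finset.mul_sum, Finset.sum_mul]
              rw [Finset.sum_comm]
              exact Finset.sum_congr rfl fun v _ => Finset.sum_congr rfl fun u _ => by ring
          _ = ∑ v ∈ C, (∑ u ∈ C, ν u * (T ^ k) u v) * T v w := by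
              symm
              refine Finset.sum_subset (Finset.subset_univ C) fun v _ hv => ?_
              have : ∑ u ∈ C, ν u * (T ^ k) u v = 0 :=
                Finset.sum_eq_zero fun u hu => by
                  rw [hpowzero k u hu v hv, mul_zero]
              rw [this, zero_mul]
          _ = ∑ v ∈ C, ν v * T v w := by
              refine Finset.sum_congr rfl fun v hv => ?_
              rw [ih v hv]
          _ = ν w := hνinv w hw
    have h1 : Tendsto
        (fun t : ℕ => ∑ u ∈ C, ν u * ((t : ℝ)⁻¹ * ∑ k ∈ Finset.range t, (T ^ k) u s'))
        atTop (nhds (∑ u ∈ C, ν u * P u s')) :=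
      tendsto_finset_sum _ fun u _ => (hP u s').const_mul (ν u)
    have h2 : Tendsto
        (fun t : ℕ => ∑ u ∈ C, ν u * ((t : ℝ)⁻¹ * ∑ k ∈ Finset.range t, (T ^ k) u s'))
        atTop (nhds (ν s')) := by
      refine Tendsto.congr' ?_ tendsto_const_nhds
      filter_upwards [eventually_ge_atTop 1] with t ht
      have htne : (t : ℝ) ≠ 0 := by positivity
      calc ν s' = (t : ℝ)⁻¹ * (t * ν s') := by field_simp
        _ = (t : ℝ)⁻¹ * ∑ k ∈ Finset.range t, ν s' := by
            rw [Finset.sum_const, Finset.card_range, nsmul_eq_mul]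
        _ = (t : ℝ)⁻¹ * ∑ k ∈ Finset.range t, ∑ u ∈ C, ν u * (T ^ k) u s' := by
            congr 1
            exact Finset.sum_congr rfl fun k _ => (invk k s' hs').symm
        _ = ∑ u ∈ C, ν u * ((t : ℝ)⁻¹ * ∑ k ∈ Finset.range t, (T ^ k) u s') := by
            simp only [Finset.mul_sum]
            rw [Finset.sum_comm]
            exact Finset.sum_congr rfl fun u _ => Finset.sum_congr rfl fun k _ => by ring
    have key : ∑ u ∈ C, ν u * P u s' = ν s' := tendsto_nhds_unique h1 h2
    calc ν s' = ∑ u ∈ C, ν u * P u s' := key.symm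
      _ = ∑ u ∈ C, ν u * P s s' := by
          refine Finset.sum_congr rfl fun u hu => ?_
          rw [part1 u hu s hs s' hs']
      _ = (∑ u ∈ C, ν u) * P s s' := by rw [Finset.sum_mul]
      _ = P s s' := by rw [hν1, one_mul]
  refine ⟨part1, fun s hs => ⟨fun s' _ => hPnn s s', hProwC s hs, fun s'' _ => hPTC s hs s''⟩,
    part3⟩
end

section
/- Let S be a nonempty finite set and T : S → S → ℝ a row-stochastic matrix. Let A ⊆ S be such that every state a ∈ A is absorbing, i.e. T a a = 1. Let Π := lim_{t→∞} (1/t) Σ_{k=0}^{t-1} T^k be the limiting matrix and let 1_A : S → ℝ be the indicator vector of A. Then for every initial probability distribution ι on S, the probability that the Markov chain ever visits A equals ι^T (Π 1_A): Pr_ι[ ∃ t ≥ 0, X_t ∈ A ] = Σ_{s,s'∈S} ι(s) Π s s' 1_A(s'). -/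
open Filter Topology MeasureTheory

section AuxHitting

variable {S : Type*} [Fintype S] [Nonempty S] [DecidableEq S]
  [MeasurableSpace S] [MeasurableSingletonClass S]

private lemma aux_pathsum (T : Matrix S S ℝ) (ι : S → ℝ) :
    ∀ (n : ℕ) (g : S → ℝ),
      ∑ v : Fin (n + 1) → S,
          ι (v 0) * (∏ i : Fin n, T (v i.castSucc) (v i.succ)) * g (v (Fin.last n))
        = ∑ s, ∑ s', ι s * (T ^ n) s s' * g s' := by
  intro n
  induction n with
  | zero =>
    intro g
    rw [← (Equiv.funUnique (Fin 1) S).symm.sum_comp]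
    simp [Matrix.one_apply, mul_ite, Finset.sum_ite_eq']
  | succ n ih =>
    intro g
    have := (Fin.snocEquiv (fun _ : Fin (n + 2) => S)).sum_comp
      (fun v => ι (v 0) * (∏ i : Fin (n + 1), T (v i.castSucc) (v i.succ)) * g (v (Fin.last (n + 1))))
    rw [← this, Fintype.sum_prod_type_right]
    have hterm : ∀ (u : Fin (n + 1) → S) (x : S),
        ι ((Fin.snoc u x : Fin (n+2) → S) 0)
            * (∏ i : Fin (n + 1), T ((Fin.snoc u x : Fin (n+2) → S) i.castSucc)
                ((Fin.snoc u x : Fin (n+2) → S) i.succ))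
            * g ((Fin.snoc u x : Fin (n+2) → S) (Fin.last (n + 1)))
          = ι (u 0) * (∏ i : Fin n, T (u i.castSucc) (u i.succ))
              * (T (u (Fin.last n)) x * g x) := by
      intro u x
      rw [Fin.prod_univ_castSucc]
      have h0 : (Fin.snoc u x : Fin (n+2) → S) 0 = u 0 := by
        rw [show (0 : Fin (n+2)) = Fin.castSucc 0 by rfl, Fin.snoc_castSucc]
      have hlast : (Fin.snoc u x : Fin (n+2) → S) (Fin.last (n + 1)) = x := Fin.snoc_last _ _
      have hmid : ∀ i : Fin n,
          T ((Fin.snoc u x : Fin (n+2) → S) (Fin.castSucc i.castSucc))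
              ((Fin.snoc u x : Fin (n+2) → S) i.castSucc.succ)
            = T (u i.castSucc) (u i.succ) := by
        intro i
        rw [Fin.snoc_castSucc, Fin.succ_castSucc, Fin.snoc_castSucc]
      have hlaststep :
          T ((Fin.snoc u x : Fin (n+2) → S) (Fin.castSucc (Fin.last n)))
              ((Fin.snoc u x : Fin (n+2) → S) (Fin.last n).succ)
            = T (u (Fin.last n)) x := by
        rw [Fin.snoc_castSucc, Fin.succ_last, Fin.snoc_last]
      rw [h0, hlast, hlaststep, Finset.prod_congr rfl (fun i _ => hmid i)]
      ring
    calc ∑ u : Fin (n+1) → S, ∑ x : S,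
            ι ((Fin.snoc u x : Fin (n+2) → S) 0)
              * (∏ i : Fin (n + 1), T ((Fin.snoc u x : Fin (n+2) → S) i.castSucc)
                  ((Fin.snoc u x : Fin (n+2) → S) i.succ))
              * g ((Fin.snoc u x : Fin (n+2) → S) (Fin.last (n + 1)))
        = ∑ u : Fin (n+1) → S,
            ι (u 0) * (∏ i : Fin n, T (u i.castSucc) (u i.succ))
              * (∑ x : S, T (u (Fin.last n)) x * g x) := by
          refine Finset.sum_congr rfl fun u _ => ?_
          rw [Finset.mul_sum]
          exact Finset.sum_congr rfl fun x _ => hterm u x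
      _ = ∑ s, ∑ s', ι s * (T ^ n) s s' * (∑ x : S, T s' x * g x) :=
          ih (fun s' => ∑ x : S, T s' x * g x)
      _ = ∑ s, ∑ x, ι s * (T ^ (n + 1)) s x * g x := by
          refine Finset.sum_congr rfl fun s _ => ?_
          simp only [Finset.mul_sum]
          rw [Finset.sum_comm]
          refine Finset.sum_congr rfl fun x _ => ?_
          rw [pow_succ, Matrix.mul_apply, Finset.mul_sum, Finset.sum_mul]
          refine Finset.sum_congr rfl fun s' _ => ?_
          ring

private lemma aux_cyl (T : Matrix S S ℝ) (ι : S → ℝ) (μ : Measure (ℕ → S))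
    (hμ : ∀ (n : ℕ) (s : ℕ → S),
      μ {ω | ∀ i ≤ n, ω i = s i}
        = ENNReal.ofReal (ι (s 0) * ∏ t ∈ Finset.range n, T (s t) (s (t + 1))))
    (n : ℕ) (v : Fin (n + 1) → S) :
    μ {ω | ∀ i : Fin (n + 1), ω i = v i}
      = ENNReal.ofReal (ι (v 0) * ∏ i : Fin n, T (v i.castSucc) (v i.succ)) := by
  set e : ℕ → S := fun j => v ⟨min j n, Nat.lt_succ_of_le (min_le_right _ _)⟩ with he
  have hev : ∀ (i : ℕ) (hi : i ≤ n), e i = v ⟨i, Nat.lt_succ_of_le hi⟩ := by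
    intro i hi
    simp only [he]
    congr 1
    exact Fin.ext (by simp [Nat.min_eq_left hi])
  have h1 : {ω : ℕ → S | ∀ i ≤ n, ω i = e i} = {ω | ∀ i : Fin (n + 1), ω i = v i} := by
    ext ω
    constructor
    · intro h i
      have hi : (i : ℕ) ≤ n := Nat.lt_succ_iff.mp i.isLt
      rw [h i hi, hev i hi]
    · intro h i hi
      rw [show ω i = ω ((⟨i, Nat.lt_succ_of_le hi⟩ : Fin (n+1)) : ℕ) from rfl,
        h ⟨i, Nat.lt_succ_of_le hi⟩, hev i hi]
  rw [← h1, hμ n e]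
  congr 1
  have h0 : e 0 = v 0 := by rw [hev 0 (Nat.zero_le n)]; exact congrArg v (Fin.ext (by simp))
  rw [h0, ← Fin.prod_univ_eq_prod_range (fun t => T (e t) (e (t + 1))) n]
  refine congrArg _ (Finset.prod_congr rfl fun i _ => ?_)
  have hi : (i : ℕ) ≤ n := le_of_lt i.isLt
  have hi1 : (i : ℕ) + 1 ≤ n := i.isLt
  rw [hev i hi, hev (i + 1) hi1]
  congr 1

private lemma aux_event (T : Matrix S S ℝ) (ι : S → ℝ) (μ : Measure (ℕ → S))
    (hμ : ∀ (n : ℕ) (s : ℕ → S),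
      μ {ω | ∀ i ≤ n, ω i = s i}
        = ENNReal.ofReal (ι (s 0) * ∏ t ∈ Finset.range n, T (s t) (s (t + 1))))
    (n : ℕ) (p : (Fin (n + 1) → S) → Prop) [DecidablePred p] :
    μ {ω | p (fun i => ω i)}
      = ∑ v ∈ Finset.univ.filter p,
          ENNReal.ofReal (ι (v 0) * ∏ i : Fin n, T (v i.castSucc) (v i.succ)) := by
  have hset : {ω : ℕ → S | p (fun i => ω i)}
      = ⋃ v ∈ (Finset.univ.filter p : Finset (Fin (n + 1) → S)),
          {ω : ℕ → S | ∀ i : Fin (n + 1), ω i = v i} := by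
    ext ω
    simp only [Set.mem_iUnion, Finset.mem_filter, Finset.mem_univ, true_and, Set.mem_setOf_eq]
    constructor
    · intro h
      exact ⟨fun i => ω i, h, fun i => rfl⟩
    · rintro ⟨v, hv, hev⟩
      have : (fun i : Fin (n + 1) => ω i) = v := funext hev
      rwa [this]
  rw [hset, measure_biUnion_finset ?_ ?_]
  · exact Finset.sum_congr rfl fun v _ => aux_cyl T ι μ hμ n v
  · intro v _ v' _ hvv'
    refine Set.disjoint_left.mpr fun ω hω hω' => hvv' (funext fun i => ?_)
    rw [← hω i, ← hω' i]
  · intro v _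
    have : {ω : ℕ → S | ∀ i : Fin (n + 1), ω i = v i}
        = ⋂ i : Fin (n + 1), (fun ω : ℕ → S => ω i) ⁻¹' {v i} := by
      ext ω; simp [Set.mem_iInter]
    rw [this]
    exact MeasurableSet.iInter fun i =>
      (measurable_pi_apply (i : ℕ)) (measurableSet_singleton (v i))

end AuxHitting

/-- **Hitting probability of an absorbing set via the limiting matrix.**
Let `T` be row-stochastic, `A` a set of absorbing states (`T a a = 1` for `a ∈ A`), and `P` the
limiting (Cesaro) matrix. If `μ` is the law of the Markov chain with initial distribution `ι` and
transitions `T`, then `Pr_ι[∃ t, X_t ∈ A] = ι^T (P 1_A)`. -/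
theorem hitting_probability_absorbing {S : Type*} [Fintype S] [Nonempty S] [DecidableEq S]
    [MeasurableSpace S] [MeasurableSingletonClass S]
    (T P : Matrix S S ℝ)
    (hnn : ∀ s s', 0 ≤ T s s') (hrow : ∀ s, ∑ s', T s s' = 1)
    (hP : ∀ s s' : S,
      Tendsto (fun t : ℕ => (t : ℝ)⁻¹ * ∑ k ∈ Finset.range t, (T ^ k) s s')
        atTop (nhds (P s s')))
    (A : Finset S) (habs : ∀ a ∈ A, T a a = 1)
    (ι : S → ℝ) (hιnn : ∀ s, 0 ≤ ι s) (hιsum : ∑ s, ι s = 1)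
    (μ : Measure (ℕ → S)) [IsProbabilityMeasure μ]
    (hμ : ∀ (n : ℕ) (s : ℕ → S),
      μ {ω | ∀ i ≤ n, ω i = s i}
        = ENNReal.ofReal (ι (s 0) * ∏ t ∈ Finset.range n, T (s t) (s (t + 1)))) :
    μ {ω | ∃ t : ℕ, ω t ∈ A}
      = ENNReal.ofReal
          (∑ s, ∑ s', ι s * P s s' * (if s' ∈ A then (1 : ℝ) else 0)) := by
  classical
  -- entries of T from an absorbing state: zero off the diagonal
  have habs0 : ∀ a ∈ A, ∀ s', s' ≠ a → T a s' = 0 := by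
    intro a ha s' hs'
    have h1 : T a a + ∑ x ∈ Finset.univ.erase a, T a x = 1 := by
      rw [Finset.add_sum_erase _ _ (Finset.mem_univ a)]
      exact hrow a
    have h2 : ∑ x ∈ Finset.univ.erase a, T a x = 0 := by
      rw [habs a ha] at h1; linarith
    have := (Finset.sum_eq_zero_iff_of_nonneg (fun x _ => hnn a x)).mp h2
    exact this s' (Finset.mem_erase.mpr ⟨hs', Finset.mem_univ s'⟩)
  -- the finite-horizon probability
  set f : ℕ → ℝ := fun n => ∑ s, ∑ s', ι s * (T ^ n) s s' * (if s' ∈ A then (1 : ℝ) else 0)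
    with hf
  have hwnn : ∀ (n : ℕ) (v : Fin (n + 1) → S),
      0 ≤ ι (v 0) * ∏ i : Fin n, T (v i.castSucc) (v i.succ) :=
    fun n v => mul_nonneg (hιnn _) (Finset.prod_nonneg fun i _ => hnn _ _)
  -- measure of {ω n ∈ A}
  have hfn : ∀ n : ℕ, μ {ω | ω n ∈ A} = ENNReal.ofReal (f n) := by
    intro n
    have hsetn : {ω : ℕ → S | ω n ∈ A}
        = {ω : ℕ → S | (fun i : Fin (n + 1) => ω i) (Fin.last n) ∈ A} := by
      ext ω; simp [Fin.val_last]
    rw [hsetn, aux_event T ι μ hμ n (fun v => v (Fin.last n) ∈ A)]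
    rw [← ENNReal.ofReal_sum_of_nonneg (fun v _ => hwnn n v)]
    congr 1
    simp only [hf]
    rw [Finset.sum_filter, ← aux_pathsum T ι n (fun s' => if s' ∈ A then (1 : ℝ) else 0)]
    refine Finset.sum_congr rfl fun v _ => ?_
    by_cases h : v (Fin.last n) ∈ A <;> simp [h]
  -- the "escaped" event is null
  have hzero : ∀ t n : ℕ, t ≤ n → μ {ω | ω t ∈ A ∧ ω n ∉ A} = 0 := by
    intro t n htn
    have htlt : t < n + 1 := Nat.lt_succ_of_le htn
    have hsetn : {ω : ℕ → S | ω t ∈ A ∧ ω n ∉ A}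
        = {ω : ℕ → S | (fun i : Fin (n + 1) => ω i) ⟨t, htlt⟩ ∈ A
            ∧ (fun i : Fin (n + 1) => ω i) (Fin.last n) ∉ A} := by
      ext ω; simp [Fin.val_last]
    rw [hsetn, aux_event T ι μ hμ n
      (fun v => v ⟨t, htlt⟩ ∈ A ∧ v (Fin.last n) ∉ A)]
    refine Finset.sum_eq_zero fun v hv => ?_
    rw [Finset.mem_filter] at hv
    obtain ⟨-, hvt, hvn⟩ := hv
    -- find a step leaving A
    have hstep : ∃ j : Fin n, v j.castSucc ∈ A ∧ v j.succ ∉ A := by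
      by_contra hcon
      push_neg at hcon
      have key : ∀ k, t ≤ k → ∀ hk : k ≤ n, v ⟨k, Nat.lt_succ_of_le hk⟩ ∈ A := by
        intro k hk
        induction k, hk using Nat.le_induction with
        | base => intro _; exact hvt
        | succ k hk ihk =>
          intro hk1
          have hkn : k < n := hk1
          have := hcon ⟨k, hkn⟩ (ihk (le_of_lt hkn))
          have hcs : (⟨k, hkn⟩ : Fin n).succ = ⟨k + 1, Nat.lt_succ_of_le hk1⟩ := rfl
          rwa [hcs] at this
      exact hvn (key n htn le_rfl)
    obtain ⟨j, hj1, hj2⟩ := hstep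
    have hne : v j.succ ≠ v j.castSucc := fun h => hj2 (h ▸ hj1)
    have hT0 : T (v j.castSucc) (v j.succ) = 0 := habs0 _ hj1 _ hne
    have : (ι (v 0) * ∏ i : Fin n, T (v i.castSucc) (v i.succ)) = 0 := by
      rw [Finset.prod_eq_zero (Finset.mem_univ j) hT0, mul_zero]
    rw [this, ENNReal.ofReal_zero]
  -- monotone family
  set F : ℕ → Set (ℕ → S) := fun n => {ω | ∃ t ≤ n, ω t ∈ A} with hFdef
  have hFmono : Monotone F := by
    intro m n hmn ω
    rintro ⟨t, htm, ht⟩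
    exact ⟨t, le_trans htm hmn, ht⟩
  have hFunion : ⋃ n, F n = {ω | ∃ t : ℕ, ω t ∈ A} := by
    ext ω
    simp only [Set.mem_iUnion, hFdef, Set.mem_setOf_eq]
    constructor
    · rintro ⟨n, t, _, ht⟩; exact ⟨t, ht⟩
    · rintro ⟨t, ht⟩; exact ⟨t, t, le_rfl, ht⟩
  have hFn : ∀ n, μ (F n) = ENNReal.ofReal (f n) := by
    intro n
    refine le_antisymm ?_ ?_
    · have hsub : F n ⊆ {ω | ω n ∈ A}
          ∪ ⋃ t : ℕ, ⋃ _ : t ≤ n, {ω : ℕ → S | ω t ∈ A ∧ ω n ∉ A} := by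
        rintro ω ⟨t, htn, ht⟩
        by_cases h : ω n ∈ A
        · exact Or.inl h
        · exact Or.inr (Set.mem_iUnion.mpr ⟨t, Set.mem_iUnion.mpr ⟨htn, ht, h⟩⟩)
      calc μ (F n) ≤ μ ({ω | ω n ∈ A}
            ∪ ⋃ t : ℕ, ⋃ _ : t ≤ n, {ω : ℕ → S | ω t ∈ A ∧ ω n ∉ A}) := measure_mono hsub
        _ ≤ μ {ω | ω n ∈ A}
            + μ (⋃ t : ℕ, ⋃ _ : t ≤ n, {ω : ℕ → S | ω t ∈ A ∧ ω n ∉ A}) := measure_union_le _ _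
        _ = ENNReal.ofReal (f n) := by
            rw [hfn n, measure_iUnion_null fun t => measure_iUnion_null fun ht => hzero t n ht,
              add_zero]
    · rw [← hfn n]
      exact measure_mono fun ω h => ⟨n, le_rfl, h⟩
  -- convergence of measures
  have htend : Tendsto (fun n => μ (F n)) atTop (𝓝 (μ {ω | ∃ t : ℕ, ω t ∈ A})) := by
    rw [← hFunion]
    exact tendsto_measure_iUnion_atTop hFmono
  -- real-valued convergence
  have hμtop : μ {ω | ∃ t : ℕ, ω t ∈ A} ≠ ⊤ := measure_ne_top μ _
  have hf_eq : ∀ n, f n = (μ (F n)).toReal := by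
    intro n
    rw [hFn n, ENNReal.toReal_ofReal]
    have hTpow : ∀ (m : ℕ) (s s' : S), 0 ≤ (T ^ m) s s' := by
      intro m
      induction m with
      | zero => intro s s'; simp only [pow_zero, Matrix.one_apply]; positivity
      | succ m ih =>
        intro s s'
        rw [pow_succ, Matrix.mul_apply]
        exact Finset.sum_nonneg fun x _ => mul_nonneg (ih s x) (hnn x s')
    simp only [hf]
    refine Finset.sum_nonneg fun s _ => Finset.sum_nonneg fun s' _ => ?_
    have h2 : (0:ℝ) ≤ if s' ∈ A then (1:ℝ) else 0 := by positivity
    exact mul_nonneg (mul_nonneg (hιnn s) (hTpow n s s')) h2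
  have hflim : Tendsto f atTop (𝓝 (μ {ω | ∃ t : ℕ, ω t ∈ A}).toReal) := by
    have := (ENNReal.tendsto_toReal hμtop).comp htend
    refine this.congr fun n => (hf_eq n).symm
  -- Cesàro convergence
  have hcesaro := hflim.cesaro
  -- identify the Cesàro limit with the P-sum
  have hrw : ∀ n : ℕ, (n : ℝ)⁻¹ * ∑ k ∈ Finset.range n, f k
      = ∑ s, ∑ s', ι s * ((n : ℝ)⁻¹ * ∑ k ∈ Finset.range n, (T ^ k) s s')
          * (if s' ∈ A then (1 : ℝ) else 0) := by
    intro n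
    simp only [hf, Finset.mul_sum, Finset.sum_mul]
    rw [Finset.sum_comm]
    refine Finset.sum_congr rfl fun s _ => ?_
    rw [Finset.sum_comm]
    exact Finset.sum_congr rfl fun s' _ => Finset.sum_congr rfl fun k _ => by ring
  have hcesaro2 : Tendsto (fun n : ℕ => (n : ℝ)⁻¹ * ∑ k ∈ Finset.range n, f k) atTop
      (𝓝 (∑ s, ∑ s', ι s * P s s' * (if s' ∈ A then (1 : ℝ) else 0))) := by
    have : Tendsto (fun n : ℕ => ∑ s, ∑ s',
        ι s * ((n : ℝ)⁻¹ * ∑ k ∈ Finset.range n, (T ^ k) s s')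
          * (if s' ∈ A then (1 : ℝ) else 0)) atTop
          (𝓝 (∑ s, ∑ s', ι s * P s s' * (if s' ∈ A then (1 : ℝ) else 0))) := by
      refine tendsto_finset_sum _ fun s _ => tendsto_finset_sum _ fun s' _ => ?_
      exact (((hP s s').const_mul (ι s)).mul_const _)
    exact this.congr fun n => (hrw n).symm
  have hLeq : (μ {ω | ∃ t : ℕ, ω t ∈ A}).toReal
      = ∑ s, ∑ s', ι s * P s s' * (if s' ∈ A then (1 : ℝ) else 0) :=
    tendsto_nhds_unique hcesaro hcesaro2
  rw [← hLeq, ENNReal.ofReal_toReal hμtop]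
end

section
/- Let S be a nonempty finite set, A ⊆ S, and let T, T_mod : S → S → ℝ be two row-stochastic matrices such that (i) T_mod s s' = T s s' whenever s ∉ A, and (ii) every a ∈ A is absorbing under T_mod (T_mod a a = 1). Then for every initial probability distribution ι on S, the probability under the original chain T of ever visiting A equals the long-run average expected occupation of A under the modified chain T_mod: Pr_{T,ι}[ ∃ t ≥ 0, X_t ∈ A ] = lim_{t→∞} (1/t) E_{T_mod,ι}[ Σ_{k=0}^{t-1} 1(X_k ∈ A) ]. -/
open Filter Topology MeasureTheory

/-!
Before its first visit to `A` a path only uses rows of the transition matrix outside `A`, where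
`T` and `Tmod` agree; splitting the hitting event according to the first hitting time shows that
both chains hit `A` with the same probability. Under `Tmod` almost no path leaves `A` once it has
entered it, so `Pr_{Tmod}[X_k ∈ A] = Pr_{Tmod}[∃ j ≤ k, X_j ∈ A]`, which increases to the hitting
probability.
The expected average occupation is the Cesàro mean of these probabilities, hence has the same
limit.
-/

lemma eq_zero_of_sum_eq_one_of_apply_eq_one {ι : Type*} [Fintype ι] {f : ι → ℝ}
    (hf : ∀ i, 0 ≤ f i) (hsum : ∑ i, f i = 1) {a b : ι} (ha : f a = 1) (hb : b ≠ a) :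
    f b = 0 := by
  classical
  have hpair := Finset.sum_le_sum_of_subset_of_nonneg (Finset.subset_univ {a, b})
    fun i _ _ => hf i
  rw [Finset.sum_pair hb.symm, hsum, ha] at hpair
  linarith [hf b]

namespace PathSpace

variable {S : Type*}

def cylinder (n : ℕ) (s : ℕ → S) : Set (ℕ → S) := {ω | ∀ i ≤ n, ω i = s i}

def pathPrefix (n : ℕ) (ω : ℕ → S) : Fin (n + 1) → S := fun i => ω i

lemma cylinder_eq_preimage_pathPrefix (n : ℕ) (s : ℕ → S) :
    cylinder n s = pathPrefix n ⁻¹' {pathPrefix n s} := by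
  ext ω
  simp only [cylinder, pathPrefix, Set.mem_ofPred_eq, Set.mem_preimage, Set.mem_singleton_iff,
    funext_iff, Fin.forall_iff, Nat.lt_succ_iff]

def firstHit (A : Set S) (n : ℕ) : Set (ℕ → S) := {ω | ω n ∈ A ∧ ∀ i < n, ω i ∉ A}

lemma iUnion_firstHit (A : Set S) : ⋃ n, firstHit A n = {ω | ∃ t, ω t ∈ A} := by
  classical
  ext ω
  simp only [firstHit, Set.mem_iUnion, Set.mem_ofPred_eq]
  refine ⟨fun ⟨n, hn, _⟩ => ⟨n, hn⟩, fun h => ?_⟩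
  exact ⟨Nat.find h, Nat.find_spec h, fun i => Nat.find_min h⟩

lemma pairwise_disjoint_firstHit (A : Set S) :
    Pairwise (Function.onFun Disjoint (firstHit A)) := by
  intro m n hmn
  refine Set.disjoint_left.mpr fun ω hm hn => ?_
  rcases hmn.lt_or_gt with h | h
  exacts [hn.2 m h hm.1, hm.2 n h hn.1]

lemma cylinder_subset_firstHit {A : Set S} {n : ℕ} {ω : ℕ → S} (hω : ω ∈ firstHit A n) :
    cylinder n ω ⊆ firstHit A n :=
  fun _ hω' => ⟨hω' n le_rfl ▸ hω.1, fun i hi => hω' i hi.le ▸ hω.2 i hi⟩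

variable [MeasurableSpace S]

lemma measurable_pathPrefix (n : ℕ) : Measurable (pathPrefix (S := S) n) :=
  measurable_pi_lambda _ fun i => measurable_pi_apply (i : ℕ)

theorem tendsto_measure_mem_of_ae_mem_succ {ν : Measure (ℕ → S)} {A : Set S}
    (h : ∀ᵐ ω ∂ν, ∀ k, ω k ∈ A → ω (k + 1) ∈ A) :
    Tendsto (fun k => ν {ω | ω k ∈ A}) atTop (𝓝 (ν {ω | ∃ t, ω t ∈ A})) := by
  have hmono : Monotone fun k => {ω : ℕ → S | ∃ j ≤ k, ω j ∈ A} :=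
    fun k l hkl ω ⟨j, hj, hjA⟩ => ⟨j, hj.trans hkl, hjA⟩
  have hunion : ⋃ k, {ω : ℕ → S | ∃ j ≤ k, ω j ∈ A} = {ω | ∃ t, ω t ∈ A} := by
    ext ω
    simp only [Set.mem_iUnion, Set.mem_ofPred_eq]
    exact ⟨fun ⟨_, j, _, hj⟩ => ⟨j, hj⟩, fun ⟨t, ht⟩ => ⟨t, t, le_rfl, ht⟩⟩
  have hae : ∀ k, {ω : ℕ → S | ω k ∈ A} =ᵐ[ν] {ω | ∃ j ≤ k, ω j ∈ A} := fun k => by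
    filter_upwards [h] with ω hω
    exact propext ⟨fun hk => ⟨k, le_rfl, hk⟩,
      fun ⟨j, hj, hjA⟩ => Nat.le_induction hjA (fun i _ => hω i) k hj⟩
  simpa only [hunion, Function.comp_def, ← measure_congr (hae _)]
    using tendsto_measure_iUnion_atTop (μ := ν) hmono

lemma integral_sum_ite_mem {ν : Measure (ℕ → S)} [IsFiniteMeasure ν] {A : Set S}
    [DecidablePred (· ∈ A)] (hA : MeasurableSet A) (t : ℕ) :
    ∫ ω, ∑ k ∈ Finset.range t, (if ω k ∈ A then (1 : ℝ) else 0) ∂ν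
      = ∑ k ∈ Finset.range t, ν.real {ω | ω k ∈ A} := by
  have hmeas : ∀ k, MeasurableSet {ω : ℕ → S | ω k ∈ A} := fun k => measurable_pi_apply k hA
  have hind : ∀ k, (fun ω : ℕ → S => if ω k ∈ A then (1 : ℝ) else 0)
      = {ω | ω k ∈ A}.indicator 1 := fun k => by
    ext ω
    simp only [Set.indicator_apply, Set.mem_ofPred_eq, Pi.one_apply]
  rw [integral_finsetSum _ fun k _ => hind k ▸ (integrable_const 1).indicator (hmeas k)]
  exact Finset.sum_congr rfl fun k _ => hind k ▸ integral_indicator_one (hmeas k)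

def IsMarkovLaw (ν : Measure (ℕ → S)) (ι : S → ℝ) (P : Matrix S S ℝ) : Prop :=
  ∀ n s, ν (cylinder n s) = ENNReal.ofReal (ι (s 0) * ∏ t ∈ Finset.range n, P (s t) (s (t + 1)))

variable {μ ν : Measure (ℕ → S)} {ι : S → ℝ} {P Q : Matrix S S ℝ}

lemma IsMarkovLaw.measure_cylinder_congr (hμ : IsMarkovLaw μ ι P) (hν : IsMarkovLaw ν ι Q)
    {n : ℕ} {s : ℕ → S} (h : ∀ t < n, P (s t) (s (t + 1)) = Q (s t) (s (t + 1))) :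
    μ (cylinder n s) = ν (cylinder n s) := by
  rw [hμ, hν, Finset.prod_congr rfl fun t ht => h t (Finset.mem_range.mp ht)]

lemma IsMarkovLaw.measure_cylinder_eq_zero (hν : IsMarkovLaw ν ι P) {n t : ℕ} {s : ℕ → S}
    (ht : t < n) (h : P (s t) (s (t + 1)) = 0) : ν (cylinder n s) = 0 := by
  rw [hν, Finset.prod_eq_zero (Finset.mem_range.mpr ht) h, mul_zero, ENNReal.ofReal_zero]

variable [Countable S] [MeasurableSingletonClass S]

theorem measure_eq_of_cylinder_eq {μ ν : Measure (ℕ → S)} {n : ℕ} {U : Set (ℕ → S)}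
    (hU : ∀ ω ∈ U, cylinder n ω ⊆ U) (h : ∀ ω ∈ U, μ (cylinder n ω) = ν (cylinder n ω)) :
    μ U = ν U := by
  have hUeq : U = pathPrefix n ⁻¹' (pathPrefix n '' U) := by
    refine (Set.subset_preimage_image _ _).antisymm ?_
    rintro ω ⟨ω', hω', hpre⟩
    exact hU ω' hω' ((cylinder_eq_preimage_pathPrefix n ω').symm ▸ hpre.symm)
  have hfiber : ∀ v ∈ pathPrefix n '' U, MeasurableSet (pathPrefix n ⁻¹' {v}) :=
    fun _ _ => measurable_pathPrefix n (measurableSet_singleton _)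
  rw [hUeq, ← tsum_measure_preimage_singleton (Set.to_countable _) hfiber,
    ← tsum_measure_preimage_singleton (Set.to_countable _) hfiber]
  refine tsum_congr ?_
  rintro ⟨_, ω, hω, rfl⟩
  simpa only [cylinder_eq_preimage_pathPrefix] using h ω hω

theorem measure_eq_zero_of_cylinder {ν : Measure (ℕ → S)} {n : ℕ} {U : Set (ℕ → S)}
    (hU : ∀ ω ∈ U, cylinder n ω ⊆ U) (h : ∀ ω ∈ U, ν (cylinder n ω) = 0) : ν U = 0 :=
  measure_eq_of_cylinder_eq (ν := 0) hU h

lemma measurableSet_mem_coord {A : Set S} (k : ℕ) : MeasurableSet {ω : ℕ → S | ω k ∈ A} :=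
  measurable_pi_apply k A.to_countable.measurableSet

lemma measurableSet_firstHit (A : Set S) (n : ℕ) : MeasurableSet (firstHit A n) := by
  simp only [firstHit, Set.ofPred_and, Set.ofPred_forall]
  exact (measurableSet_mem_coord n).inter
    (MeasurableSet.iInter fun i => MeasurableSet.iInter fun _ => (measurableSet_mem_coord i).compl)

theorem IsMarkovLaw.measure_hit_eq (hμ : IsMarkovLaw μ ι P) (hν : IsMarkovLaw ν ι Q)
    {A : Set S} (hPQ : ∀ s ∉ A, ∀ s', P s s' = Q s s') :
    μ {ω | ∃ t, ω t ∈ A} = ν {ω | ∃ t, ω t ∈ A} := by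
  have hdecomp (ρ : Measure (ℕ → S)) :=
    measure_iUnion (μ := ρ) (pairwise_disjoint_firstHit A) (measurableSet_firstHit A)
  rw [← iUnion_firstHit, hdecomp μ, hdecomp ν]
  refine tsum_congr fun n => measure_eq_of_cylinder_eq (fun _ => cylinder_subset_firstHit)
    fun ω hω => hμ.measure_cylinder_congr hν fun t ht => hPQ _ (hω.2 t ht) _

theorem IsMarkovLaw.ae_mem_succ_of_mem (hν : IsMarkovLaw ν ι P) {A : Set S}
    (hA : ∀ a ∈ A, ∀ b ∉ A, P a b = 0) : ∀ᵐ ω ∂ν, ∀ k, ω k ∈ A → ω (k + 1) ∈ A := by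
  refine ae_all_iff.mpr fun k => ae_iff.mpr (measure_eq_zero_of_cylinder (n := k + 1) ?_ ?_)
  · intro ω hω ω' hω'
    simpa only [Set.mem_ofPred_eq, hω' k k.le_succ, hω' (k + 1) le_rfl] using hω
  · intro ω hω
    obtain ⟨hk, hk1⟩ := Classical.not_imp.mp hω
    exact hν.measure_cylinder_eq_zero k.lt_succ_self (hA _ hk _ hk1)

end PathSpace

theorem hitting_prob_eq_average_occupation_modified_general {S : Type*}
    [Fintype S] [DecidableEq S]
    [MeasurableSpace S] [MeasurableSingletonClass S]
    (T Tmod : Matrix S S ℝ)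
    (hnn' : ∀ s s', 0 ≤ Tmod s s') (hrow' : ∀ s, ∑ s', Tmod s s' = 1)
    (A : Finset S)
    (hagree : ∀ s s' : S, s ∉ A → Tmod s s' = T s s')
    (habs : ∀ a ∈ A, Tmod a a = 1)
    (ι : S → ℝ)
    (μ μmod : Measure (ℕ → S)) [IsProbabilityMeasure μmod]
    (hμ : ∀ (n : ℕ) (s : ℕ → S),
      μ {ω | ∀ i ≤ n, ω i = s i}
        = ENNReal.ofReal (ι (s 0) * ∏ t ∈ Finset.range n, T (s t) (s (t + 1))))
    (hμmod : ∀ (n : ℕ) (s : ℕ → S),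
      μmod {ω | ∀ i ≤ n, ω i = s i}
        = ENNReal.ofReal (ι (s 0) * ∏ t ∈ Finset.range n, Tmod (s t) (s (t + 1)))) :
    Tendsto
      (fun t : ℕ =>
        (t : ℝ)⁻¹ * ∫ ω, (∑ k ∈ Finset.range t, (if ω k ∈ A then (1 : ℝ) else 0)) ∂μmod)
      atTop (nhds (μ {ω | ∃ t : ℕ, ω t ∈ A}).toReal) := by
  have hleave : ∀ a ∈ (A : Set S), ∀ b ∉ (A : Set S), Tmod a b = 0 := fun a ha b hb =>
    eq_zero_of_sum_eq_one_of_apply_eq_one (hnn' a) (hrow' a) (habs a ha)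
      (ne_of_mem_of_not_mem ha hb).symm
  have hhit : μ {ω | ∃ t, ω t ∈ A} = μmod {ω | ∃ t, ω t ∈ A} :=
    PathSpace.IsMarkovLaw.measure_hit_eq hμ hμmod fun s hs s' => (hagree s s' hs).symm
  have hocc : Tendsto (fun k => μmod.real {ω | ω k ∈ A}) atTop
      (𝓝 (μmod {ω | ∃ t, ω t ∈ A}).toReal) :=
    (ENNReal.tendsto_toReal (measure_ne_top _ _)).comp <|
      PathSpace.tendsto_measure_mem_of_ae_mem_succ <|
      PathSpace.IsMarkovLaw.ae_mem_succ_of_mem hμmod hleave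
  rw [hhit]
  exact hocc.cesaro.congr fun t =>
    congrArg _ (PathSpace.integral_sum_ite_mem A.finite_toSet.measurableSet t).symm

/-- **Hitting probability equals long-run average occupation in the modified chain.**
Let `T, Tmod` be row-stochastic matrices on `S` such that `Tmod` agrees with `T` on all rows
outside `A` and every state of `A` is absorbing under `Tmod`. Let `μ` be the law of the chain
with transitions `T` and `μmod` that of the chain with transitions `Tmod`, both with initial
distribution `ι`. Then
`Pr_{T,ι}[∃ t, X_t ∈ A] = lim_{t→∞} (1/t) E_{Tmod,ι}[∑_{k<t} 1(X_k ∈ A)]`. -/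
theorem hitting_prob_eq_average_occupation_modified {S : Type*}
    [Fintype S] [Nonempty S] [DecidableEq S]
    [MeasurableSpace S] [MeasurableSingletonClass S]
    (T Tmod : Matrix S S ℝ)
    (hnn : ∀ s s', 0 ≤ T s s') (hrow : ∀ s, ∑ s', T s s' = 1)
    (hnn' : ∀ s s', 0 ≤ Tmod s s') (hrow' : ∀ s, ∑ s', Tmod s s' = 1)
    (A : Finset S)
    (hagree : ∀ s s' : S, s ∉ A → Tmod s s' = T s s')
    (habs : ∀ a ∈ A, Tmod a a = 1)
    (ι : S → ℝ) (hιnn : ∀ s, 0 ≤ ι s) (hιsum : ∑ s, ι s = 1)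
    (μ μmod : Measure (ℕ → S)) [IsProbabilityMeasure μ] [IsProbabilityMeasure μmod]
    (hμ : ∀ (n : ℕ) (s : ℕ → S),
      μ {ω | ∀ i ≤ n, ω i = s i}
        = ENNReal.ofReal (ι (s 0) * ∏ t ∈ Finset.range n, T (s t) (s (t + 1))))
    (hμmod : ∀ (n : ℕ) (s : ℕ → S),
      μmod {ω | ∀ i ≤ n, ω i = s i}
        = ENNReal.ofReal (ι (s 0) * ∏ t ∈ Finset.range n, Tmod (s t) (s (t + 1)))) :
    Tendsto
      (fun t : ℕ =>
        (t : ℝ)⁻¹ * ∫ ω, (∑ k ∈ Finset.range t, (if ω k ∈ A then (1 : ℝ) else 0)) ∂μmod)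
      atTop (nhds (μ {ω | ∃ t : ℕ, ω t ∈ A}).toReal) :=
  hitting_prob_eq_average_occupation_modified_general T Tmod hnn' hrow' A hagree habs ι μ μmod hμ
    hμmod
end
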